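/- arXiv:0707.3383 — 8 statements merged into one kernel-verified Lean document; each statement's English description precedes it below -/
import Mathlib

section
/- Let n ≥ 1 and let L be the Lindblad generator on n×n complex matrices associated with a Hermitian matrix H and a finite family of matrices (Vᵢ). Suppose ρ₀ is a positive definite matrix with trace 1 satisfying L(ρ₀) = 0, and suppose that every n×n complex matrix commuting with H and with every Vᵢ and every Vᵢ† is a complex scalar multiple of the identity. Then ρ₀ is the unique stationary density matrix: every positive semidefinite matrix ρ with trace 1 and L(ρ) = 0 equals ρ₀. -/
/-!
Work in the Heisenberg picture: let `L*` be the adjoint of `L` for the pairing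
`⟨B, ρ⟩ = tr (B ρ)`. If `L* B = 0`, the dissipation identity
`L*(B†B) = L*(B†) B + B† L*(B) + Σᵢ [Vᵢ, B]† [Vᵢ, B]` paired with the faithful stationary state
`ρ₀` gives `Σᵢ tr ([Vᵢ, B] ρ₀ [Vᵢ, B]†) = tr (B†B L ρ₀) = 0`, so `B` commutes with every `Vᵢ`;
as `L*` commutes with `†`, the same holds for `B†`, so `B` also commutes with every `Vᵢ†`, and
then `L* B = i[H, B]` forces `B` to commute with `H`.
By the commutant hypothesis `ker L* = ℂ 1`, hence `ker L` is one-dimensional as well, so it is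
spanned by `ρ₀`, and the trace normalisation pins down `ρ = ρ₀`.
-/

open Matrix
open scoped ComplexOrder

/-- The Lindblad generator associated with a Hamiltonian `H` and a family of
operators `V i`. -/
noncomputable def lindblad {n m : ℕ} (H : Matrix (Fin n) (Fin n) ℂ)
    (V : Fin m → Matrix (Fin n) (Fin n) ℂ) (ρ : Matrix (Fin n) (Fin n) ℂ) :
    Matrix (Fin n) (Fin n) ℂ :=
  (-Complex.I) • (H * ρ - ρ * H) +
    ∑ i, (V i * ρ * (V i)ᴴ -
      (1 / 2 : ℂ) • ((V i)ᴴ * V i * ρ + ρ * ((V i)ᴴ * V i)))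

open Module
open LinearMap (mulLeft mulRight ker)

theorem LinearMap.IsAdjointPair.finrank_ker_eq {K V : Type*} [Field K] [AddCommGroup V]
    [Module K V] [FiniteDimensional K V] {B : V →ₗ[K] V →ₗ[K] K} {f g : V →ₗ[K] V}
    (hfg : IsAdjointPair B B g f) (hB : Function.Injective B) :
    finrank K (ker g) = finrank K (ker f) := by
  have hB_surj : Function.Surjective B :=
    (injective_iff_surjective_of_finrank_eq_finrank Subspace.dual_finrank_eq.symm).mp hB
  have hcomp : B ∘ₗ g = f.dualMap ∘ₗ B := by ext x y; exact hfg x y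
  have hker : ker (B ∘ₗ g) = ker g := ker_comp_of_ker_eq_bot g (ker_eq_bot.mpr hB)
  have hrange : range (B ∘ₗ g) = range f.dualMap := by
    rw [hcomp, range_comp_of_range_eq_top _ (range_eq_top.mpr hB_surj)]
  have hg := finrank_range_add_finrank_ker (B ∘ₗ g)
  rw [hker, hrange, finrank_range_dualMap_eq_finrank_range] at hg
  have hf := finrank_range_add_finrank_ker f
  omega

namespace Matrix

noncomputable def tracePairing (ι R : Type*) [Fintype ι] [CommSemiring R] :
    Matrix ι ι R →ₗ[R] Matrix ι ι R →ₗ[R] R :=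
  (LinearMap.mul R (Matrix ι ι R)).compr₂ (traceLinearMap ι R R)

@[simp]
theorem tracePairing_apply {ι R : Type*} [Fintype ι] [CommSemiring R] (A B : Matrix ι ι R) :
    tracePairing ι R A B = (A * B).trace :=
  rfl

theorem tracePairing_injective (ι R : Type*) [Fintype ι] [CommSemiring R] :
    Function.Injective (tracePairing ι R) :=
  fun _ _ h => ext_iff_trace_mul_right.mpr fun x => congr($h x)

variable {ι κ 𝕜 : Type*} [Fintype ι] [Fintype κ] [RCLike 𝕜] {ρ : Matrix ι ι 𝕜}

theorem PosDef.trace_mul_mul_conjTranspose_eq_zero_iff (hρ : ρ.PosDef) {C : Matrix ι ι 𝕜} :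
    (C * ρ * Cᴴ).trace = 0 ↔ C = 0 := by
  -- `(C * ρ * Cᴴ).trace` is `⟪C, C⟫` for the inner product on matrices induced by `ρ`
  let _ := ρ.toMatrixNormedAddCommGroup hρ
  let _ := ρ.toMatrixInnerProductSpace hρ.posSemidef
  exact inner_self_eq_zero (𝕜 := 𝕜) (x := C)

theorem PosDef.eq_zero_of_sum_trace_mul_mul_conjTranspose_eq_zero (hρ : ρ.PosDef)
    {C : κ → Matrix ι ι 𝕜} (h : ∑ j, (C j * ρ * (C j)ᴴ).trace = 0) (i : κ) : C i = 0 :=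
  hρ.trace_mul_mul_conjTranspose_eq_zero_iff.mp <|
    (Finset.sum_eq_zero_iff_of_nonneg fun j _ =>
      (hρ.posSemidef.mul_mul_conjTranspose_same (C j)).trace_nonneg).mp h i (Finset.mem_univ i)

end Matrix

section LindbladDual

variable {ι κ : Type*} [Fintype ι] [Fintype κ] (H : Matrix ι ι ℂ) (V : κ → Matrix ι ι ℂ)

noncomputable def lindbladDual : Matrix ι ι ℂ →ₗ[ℂ] Matrix ι ι ℂ :=
  Complex.I • (mulLeft ℂ H - mulRight ℂ H) +
    ∑ i, (mulLeft ℂ (V i)ᴴ ∘ₗ mulRight ℂ (V i) -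
      (1 / 2 : ℂ) • (mulLeft ℂ ((V i)ᴴ * V i) + mulRight ℂ ((V i)ᴴ * V i)))

theorem lindbladDual_apply (A : Matrix ι ι ℂ) :
    lindbladDual H V A = Complex.I • (H * A - A * H) +
      ∑ i, ((V i)ᴴ * A * V i - (1 / 2 : ℂ) • ((V i)ᴴ * V i * A + A * ((V i)ᴴ * V i))) := by
  simp [lindbladDual, LinearMap.sum_apply, mul_assoc]

theorem lindbladDual_eq_of_commute {A : Matrix ι ι ℂ}
    (hA : ∀ i, Commute (V i) A ∧ Commute (V i)ᴴ A) :
    lindbladDual H V A = Complex.I • (H * A - A * H) := by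
  rw [lindbladDual_apply, add_eq_left]
  refine Finset.sum_eq_zero fun i _ => ?_
  rw [mul_assoc, ← (hA i).1.eq, ← mul_assoc, ← ((hA i).2.mul_left (hA i).1).eq]
  module

theorem lindbladDual_conjTranspose (hH : H.IsHermitian) (A : Matrix ι ι ℂ) :
    lindbladDual H V Aᴴ = (lindbladDual H V A)ᴴ := by
  simp only [lindbladDual_apply, conjTranspose_add, conjTranspose_smul, conjTranspose_sub,
    conjTranspose_sum, conjTranspose_mul, conjTranspose_conjTranspose, hH.eq, mul_assoc,
    Complex.star_def, Complex.conj_I, map_div₀, map_one, map_ofNat]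
  rw [neg_smul, smul_sub, smul_sub, neg_sub]
  congr 1
  refine Finset.sum_congr rfl fun i _ => ?_
  rw [add_comm (Aᴴ * _)]

theorem lindbladDual_conjTranspose_mul_self (A : Matrix ι ι ℂ) :
    lindbladDual H V (Aᴴ * A) = lindbladDual H V Aᴴ * A + Aᴴ * lindbladDual H V A +
      ∑ i, (V i * A - A * V i)ᴴ * (V i * A - A * V i) := by
  simp only [lindbladDual_apply, add_mul, mul_add, Finset.sum_mul, Finset.mul_sum,
    smul_mul_assoc, mul_smul_comm, sub_mul, mul_sub, smul_add, smul_sub,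
    conjTranspose_sub, conjTranspose_mul, mul_assoc,
    Finset.sum_add_distrib, Finset.sum_sub_distrib, ← Finset.smul_sum]
  module

end LindbladDual

section Lindblad

variable {n m : ℕ} {H : Matrix (Fin n) (Fin n) ℂ} {V : Fin m → Matrix (Fin n) (Fin n) ℂ}

variable (H V) in
noncomputable def lindbladLinearMap : Matrix (Fin n) (Fin n) ℂ →ₗ[ℂ] Matrix (Fin n) (Fin n) ℂ :=
  (-Complex.I) • (mulLeft ℂ H - mulRight ℂ H) +
    ∑ i, (mulRight ℂ (V i)ᴴ ∘ₗ mulLeft ℂ (V i) -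
      (1 / 2 : ℂ) • (mulLeft ℂ ((V i)ᴴ * V i) + mulRight ℂ ((V i)ᴴ * V i)))

theorem lindbladLinearMap_apply (ρ : Matrix (Fin n) (Fin n) ℂ) :
    lindbladLinearMap H V ρ = lindblad H V ρ := by
  simp [lindbladLinearMap, lindblad, LinearMap.sum_apply, mul_assoc]

variable (H V) in
theorem trace_lindbladDual_mul (B ρ : Matrix (Fin n) (Fin n) ℂ) :
    (lindbladDual H V B * ρ).trace = (B * lindblad H V ρ).trace := by
  simp only [lindbladDual_apply, lindblad, add_mul, mul_add, sub_mul, mul_sub, Finset.sum_mul,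
    Finset.mul_sum, smul_mul_assoc, mul_smul_comm, trace_add, trace_sub, trace_sum, trace_smul,
    smul_eq_mul, mul_assoc]
  have hH : (H * (B * ρ)).trace = (B * (ρ * H)).trace := by rw [trace_mul_comm, mul_assoc]
  have hV : ∀ i, ((V i)ᴴ * (B * (V i * ρ))).trace = (B * (V i * (ρ * (V i)ᴴ))).trace ∧
      ((V i)ᴴ * (V i * (B * ρ))).trace = (B * (ρ * ((V i)ᴴ * V i))).trace := fun i =>
    ⟨by rw [trace_mul_comm]; simp only [mul_assoc],
      by rw [← mul_assoc, trace_mul_comm, mul_assoc]⟩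
  simp only [hH, (hV _).1, (hV _).2, add_comm (1 / 2 * (B * (ρ * _)).trace)]
  ring

theorem commute_of_lindbladDual_eq_zero (hH : H.IsHermitian) {ρ₀ : Matrix (Fin n) (Fin n) ℂ}
    (hρ₀ : ρ₀.PosDef) (hstat : lindblad H V ρ₀ = 0) {B : Matrix (Fin n) (Fin n) ℂ}
    (hB : lindbladDual H V B = 0) (i : Fin m) : Commute (V i) B := by
  have hB' : lindbladDual H V Bᴴ = 0 := by
    rw [lindbladDual_conjTranspose H V hH, hB, conjTranspose_zero]
  have hsum : ∑ i, ((V i * B - B * V i) * ρ₀ * (V i * B - B * V i)ᴴ).trace = 0 := calc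
    _ = (lindbladDual H V (Bᴴ * B) * ρ₀).trace := by
      simp only [lindbladDual_conjTranspose_mul_self, hB, hB', zero_mul, mul_zero, zero_add,
        Finset.sum_mul, trace_sum, mul_assoc]
      exact Finset.sum_congr rfl fun i _ => by
        rw [Matrix.trace_mul_comm (V i * B - B * V i)ᴴ, mul_assoc]
    _ = 0 := by rw [trace_lindbladDual_mul, hstat, mul_zero, trace_zero]
  exact sub_eq_zero.mp (hρ₀.eq_zero_of_sum_trace_mul_mul_conjTranspose_eq_zero hsum i)

theorem ker_lindbladDual_eq_span_one (hH : H.IsHermitian) {ρ₀ : Matrix (Fin n) (Fin n) ℂ}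
    (hρ₀ : ρ₀.PosDef) (hstat : lindblad H V ρ₀ = 0)
    (hcomm : ∀ M : Matrix (Fin n) (Fin n) ℂ,
      (M * H = H * M ∧ ∀ i, M * V i = V i * M ∧ M * (V i)ᴴ = (V i)ᴴ * M) →
        ∃ c : ℂ, M = c • (1 : Matrix (Fin n) (Fin n) ℂ)) :
    ker (lindbladDual H V) = ℂ ∙ 1 := by
  refine le_antisymm (fun A hA => ?_) ((Submodule.span_singleton_le_iff_mem _ _).mpr ?_)
  · rw [LinearMap.mem_ker] at hA
    have hA' : lindbladDual H V Aᴴ = 0 := by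
      rw [lindbladDual_conjTranspose H V hH, hA, conjTranspose_zero]
    have hV : ∀ i, Commute (V i) A ∧ Commute (V i)ᴴ A := fun i =>
      ⟨commute_of_lindbladDual_eq_zero hH hρ₀ hstat hA i, by
        simpa only [star_eq_conjTranspose, conjTranspose_conjTranspose] using
          commute_star_star.mpr (commute_of_lindbladDual_eq_zero hH hρ₀ hstat hA' i)⟩
    have hHA : A * H = H * A := by
      rw [lindbladDual_eq_of_commute H V hV, smul_eq_zero] at hA
      exact (sub_eq_zero.mp (hA.resolve_left Complex.I_ne_zero)).symm
    obtain ⟨c, hc⟩ := hcomm A ⟨hHA, fun i => ⟨(hV i).1.eq.symm, (hV i).2.eq.symm⟩⟩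
    exact Submodule.mem_span_singleton.mpr ⟨c, hc.symm⟩
  · rw [LinearMap.mem_ker, lindbladDual_eq_of_commute H V fun i =>
      ⟨Commute.one_right _, Commute.one_right _⟩, mul_one, one_mul, sub_self, smul_zero]

theorem finrank_ker_lindbladLinearMap_eq_one [NeZero n]
    (hker : ker (lindbladDual H V) = ℂ ∙ 1) :
    finrank ℂ (ker (lindbladLinearMap H V)) = 1 := by
  have hdual : LinearMap.IsAdjointPair (tracePairing (Fin n) ℂ) (tracePairing (Fin n) ℂ)
      (lindbladDual H V) (lindbladLinearMap H V) := fun B ρ => by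
    rw [tracePairing_apply, tracePairing_apply, lindbladLinearMap_apply, trace_lindbladDual_mul]
  rw [← hdual.finrank_ker_eq (tracePairing_injective (Fin n) ℂ), hker,
    finrank_span_singleton one_ne_zero]

end Lindblad

theorem unique_stationary_state_general {n m : ℕ}
    (H : Matrix (Fin n) (Fin n) ℂ) (hH : H.IsHermitian)
    (V : Fin m → Matrix (Fin n) (Fin n) ℂ)
    (ρ₀ : Matrix (Fin n) (Fin n) ℂ)
    (h₀pos : ρ₀.PosDef) (h₀tr : ρ₀.trace = 1)
    (h₀stat : lindblad H V ρ₀ = 0)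
    (hcomm : ∀ M : Matrix (Fin n) (Fin n) ℂ,
      (M * H = H * M ∧ ∀ i, M * V i = V i * M ∧ M * (V i)ᴴ = (V i)ᴴ * M) →
        ∃ c : ℂ, M = c • (1 : Matrix (Fin n) (Fin n) ℂ))
    (ρ : Matrix (Fin n) (Fin n) ℂ) (htr : ρ.trace = 1)
    (hstat : lindblad H V ρ = 0) :
    ρ = ρ₀ := by
  have hρ₀ : ρ₀ ≠ 0 := by rintro rfl; simp at h₀tr
  have : NeZero n := ⟨by rintro rfl; simp at h₀tr⟩
  have hker : ker (lindbladLinearMap H V) = ℂ ∙ ρ₀ :=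
    eq_span_singleton_of_mem_of_finrank_eq_one
      (finrank_ker_lindbladLinearMap_eq_one (ker_lindbladDual_eq_span_one hH h₀pos h₀stat hcomm))
      (by rwa [LinearMap.mem_ker, lindbladLinearMap_apply]) hρ₀
  have hρ : ρ ∈ ker (lindbladLinearMap H V) := by
    rwa [LinearMap.mem_ker, lindbladLinearMap_apply]
  obtain ⟨c, rfl⟩ := Submodule.mem_span_singleton.mp (hker ▸ hρ)
  rw [trace_smul, h₀tr, smul_eq_mul, mul_one] at htr
  rw [htr, one_smul]

theorem unique_stationary_state {n m : ℕ} (hn : 1 ≤ n)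
    (H : Matrix (Fin n) (Fin n) ℂ) (hH : H.IsHermitian)
    (V : Fin m → Matrix (Fin n) (Fin n) ℂ)
    (ρ₀ : Matrix (Fin n) (Fin n) ℂ)
    (h₀pos : ρ₀.PosDef) (h₀tr : ρ₀.trace = 1)
    (h₀stat : lindblad H V ρ₀ = 0)
    (hcomm : ∀ M : Matrix (Fin n) (Fin n) ℂ,
      (M * H = H * M ∧ ∀ i, M * V i = V i * M ∧ M * (V i)ᴴ = (V i)ᴴ * M) →
        ∃ c : ℂ, M = c • (1 : Matrix (Fin n) (Fin n) ℂ))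
    (ρ : Matrix (Fin n) (Fin n) ℂ) (hρ : ρ.PosSemidef) (htr : ρ.trace = 1)
    (hstat : lindblad H V ρ = 0) :
    ρ = ρ₀ :=
  unique_stationary_state_general H hH V ρ₀ h₀pos h₀tr h₀stat hcomm ρ htr hstat
end

section
/- Let n ≥ 1 and let L be the Lindblad generator on n×n complex matrices associated with a Hermitian matrix H and a finite family (Vᵢ) that is closed under conjugate transpose. Let M be the set of matrices commuting with H and with every Vᵢ, and suppose M also equals the set of matrices commuting with every Vᵢ. Suppose ρ₀ is a positive definite matrix with trace 1 satisfying L(ρ₀) = 0. Suppose P₁, …, Pₘ are Hermitian idempotent matrices with Pⱼ Pₖ = 0 for j ≠ k and P₁ + ⋯ + Pₘ = I, such that the commutant M′ of M equals the ℂ-linear span of {P₁, …, Pₘ} (so that the center Z = M ∩ M′ equals M′). Then for every density matrix ρ, exp(tL)(ρ) converges as t → +∞ to Σₙ Pₙ ρ Pₙ. -/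
open Matrix
open scoped ComplexOrder

attribute [local instance] Matrix.frobeniusNormedAddCommGroup Matrix.frobeniusNormedSpace

/-!
`H` and every `Vᵢ` commute with `M`, so they lie in `M′ = span {Pⱼ}`: `H = ∑ hⱼ Pⱼ` with real `hⱼ`
(`H` and the `Pⱼ` are Hermitian) and `Vᵢ = ∑ vᵢⱼ Pⱼ`. Hence `L` acts on each block `Pⱼ X Pₗ` as
multiplication by a scalar `λⱼₗ` with `Re λⱼₗ = -½ ∑ᵢ |vᵢⱼ - vᵢₗ|²` and `λⱼⱼ = 0`, so that
`exp (tL) ρ = ∑ⱼ ∑ₗ e^{tλⱼₗ} Pⱼ ρ Pₗ`. If `j ≠ l` and `vᵢⱼ = vᵢₗ` for all `i`, the block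
`Pⱼ ρ Pₗ` commutes with every `Vᵢ`, hence lies in `M`; then `Pⱼ ∈ M′` commutes with it, which
forces it to vanish. So every nonzero off-diagonal block decays and only `∑ⱼ Pⱼ ρ Pⱼ` survives.
-/

open ComplexConjugate

lemma IsIdempotentElem.mul_mul_eq_zero_of_commute {A : Type*} [Semiring A] {e f : A}
    (he : IsIdempotentElem e) (hfe : f * e = 0) (x : A) (hcomm : Commute e (e * x * f)) :
    e * x * f = 0 :=
  calc e * x * f = e * (e * x * f) := by rw [← mul_assoc, ← mul_assoc, he.eq]
    _ = e * x * f * e := hcomm.eq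
    _ = 0 := by rw [mul_assoc, hfe, mul_zero]

lemma CompleteOrthogonalIdempotents.sum_sum_mul_mul {A ι : Type*} [Semiring A] [Fintype ι]
    {e : ι → A} (he : CompleteOrthogonalIdempotents e) (x : A) :
    ∑ j, ∑ l, e j * x * e l = x := by
  simp [← Finset.mul_sum, ← Finset.sum_mul, he.complete]

namespace OrthogonalIdempotents

variable {R A ι : Type*} [CommSemiring R] [Semiring A] [Algebra R A] [Fintype ι] {e : ι → A}

lemma sum_smul_mul (he : OrthogonalIdempotents e) (c : ι → R) (j : ι) :
    (∑ i, c i • e i) * e j = c j • e j := by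
  classical
  simp [Finset.sum_mul, he.mul_eq]

lemma mul_sum_smul (he : OrthogonalIdempotents e) (c : ι → R) (j : ι) :
    e j * (∑ i, c i • e i) = c j • e j := by
  classical
  simp [Finset.mul_sum, he.mul_eq]

lemma sum_smul_mul_mul_mul (he : OrthogonalIdempotents e) (c : ι → R) (j l : ι) (x : A) :
    (∑ i, c i • e i) * (e j * x * e l) = c j • (e j * x * e l) := by
  rw [← mul_assoc, ← mul_assoc, he.sum_smul_mul, smul_mul_assoc, smul_mul_assoc]

lemma mul_mul_mul_sum_smul (he : OrthogonalIdempotents e) (c : ι → R) (j l : ι) (x : A) :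
    e j * x * e l * (∑ i, c i • e i) = c l • (e j * x * e l) := by
  rw [mul_assoc, he.mul_sum_smul, mul_smul_comm]

lemma exists_ne_of_mul_mul_ne_zero {κ : Type*} (he : OrthogonalIdempotents e) {V : κ → A}
    {v : κ → ι → R} (hV : ∀ i, V i = ∑ j, v i j • e j) {j l : ι} (hjl : j ≠ l)
    (hcomm : ∀ E, (∀ i, Commute E (V i)) → Commute (e j) E) {x : A} (hx : e j * x * e l ≠ 0) :
    ∃ i, v i j ≠ v i l := by
  by_contra! hv
  refine hx <| (he.idem j).mul_mul_eq_zero_of_commute (he.ortho hjl.symm) x <|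
    hcomm _ fun i => ?_
  rw [Commute, SemiconjBy, hV, he.mul_mul_mul_sum_smul, he.sum_smul_mul_mul_mul, hv i]

end OrthogonalIdempotents

lemma sum_re_smul_eq_of_isSelfAdjoint {A ι : Type*} [AddCommGroup A] [Module ℂ A]
    [StarAddMonoid A] [StarModule ℂ A] [Fintype ι] {e : ι → A} (he : ∀ i, IsSelfAdjoint (e i))
    {c : ι → ℂ} {x : A} (hx : IsSelfAdjoint x) (hxc : x = ∑ i, c i • e i) :
    x = ∑ i, ((c i).re : ℂ) • e i := by
  have hstar : x = ∑ i, star (c i) • e i := by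
    simpa [star_sum, star_smul, (he _).star_eq] using hx.star_eq.symm.trans (congrArg star hxc)
  calc x = (2 : ℂ)⁻¹ • (x + x) := by rw [← two_smul ℂ x, smul_smul]; norm_num
    _ = (2 : ℂ)⁻¹ • (∑ i, c i • e i + ∑ i, star (c i) • e i) := by rw [← hxc, ← hstar]
    _ = ∑ i, ((c i).re : ℂ) • e i := by
      rw [← Finset.sum_add_distrib, Finset.smul_sum]
      refine Finset.sum_congr rfl fun i _ => ?_
      rw [← add_smul, smul_smul, Complex.re_eq_add_conj, Complex.star_def, div_eq_inv_mul]

section Exponential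

variable {E : Type*} [NormedAddCommGroup E] [NormedSpace ℂ E]

lemma tendsto_cexp_mul_smul_atTop_zero {c : ℂ} (hc : c.re < 0) (x : E) :
    Filter.Tendsto (fun t : ℝ => Complex.exp (t * c) • x) Filter.atTop (nhds 0) := by
  rw [tendsto_zero_iff_norm_tendsto_zero]
  simp only [norm_smul, Complex.norm_exp, Complex.re_ofReal_mul]
  simpa using (Real.tendsto_exp_atBot.comp
    (Filter.tendsto_id.atTop_mul_const_of_neg hc)).mul_const ‖x‖

variable [CompleteSpace E]

lemma exp_apply_of_apply_eq_smul {A : E →L[ℂ] E} {x : E} {c : ℂ} (hx : A x = c • x) :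
    NormedSpace.exp A x = Complex.exp c • x := by
  have hpow : ∀ k : ℕ, (A ^ k) x = c ^ k • x := by
    intro k
    induction k with
    | zero => simp
    | succ k ih =>
      rw [pow_succ, mul_apply_eq_comp, hx, map_smul, ih, smul_smul, pow_succ, mul_comm]
  have hA := (NormedSpace.exp_series_hasSum_exp' (𝕂 := ℂ) A).mapL
    (ContinuousLinearMap.apply ℂ E x)
  have hc := (NormedSpace.exp_series_hasSum_exp' (𝕂 := ℂ) c).smul_const x
  simp only [ContinuousLinearMap.apply_apply, _root_.smul_apply, hpow, smul_smul] at hA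
  rw [← Complex.exp_eq_exp_ℂ] at hc
  exact hA.unique hc

lemma exp_real_smul_apply_of_apply_eq_smul {A : E →L[ℂ] E} {x : E} {c : ℂ} (hx : A x = c • x)
    (t : ℝ) : NormedSpace.exp (t • A) x = Complex.exp (t * c) • x := by
  refine exp_apply_of_apply_eq_smul ?_
  rw [_root_.smul_apply, hx, ← Complex.coe_smul, smul_smul]

end Exponential

noncomputable def lindbladBlockEigenvalue {ι κ : Type*} [Fintype κ] (h : ι → ℝ)
    (v : κ → ι → ℂ) (j l : ι) : ℂ :=
  -Complex.I * (h j - h l) +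
    ∑ i, (v i j * conj (v i l) - (1 / 2 : ℂ) * (conj (v i j) * v i j + conj (v i l) * v i l))

section BlockEigenvalue

variable {ι κ : Type*} [Fintype κ] (h : ι → ℝ) (v : κ → ι → ℂ)

lemma lindbladBlockEigenvalue_self (j : ι) : lindbladBlockEigenvalue h v j j = 0 := by
  simp only [lindbladBlockEigenvalue, sub_self, mul_zero, zero_add]
  exact Finset.sum_eq_zero fun i _ => by ring

lemma re_lindbladBlockEigenvalue (j l : ι) :
    (lindbladBlockEigenvalue h v j l).re = -(1 / 2) * ∑ i, ‖v i j - v i l‖ ^ 2 := by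
  have hHamiltonian : (-Complex.I * ((h j : ℂ) - h l)).re = 0 := by simp
  rw [lindbladBlockEigenvalue, Complex.add_re, hHamiltonian, zero_add, Complex.re_sum,
    Finset.mul_sum]
  refine Finset.sum_congr rfl fun i _ => ?_
  simp [Complex.sq_norm, Complex.normSq_apply, Complex.mul_re]
  ring

lemma re_lindbladBlockEigenvalue_neg {j l : ι} (hv : ∃ i, v i j ≠ v i l) :
    (lindbladBlockEigenvalue h v j l).re < 0 := by
  obtain ⟨i, hi⟩ := hv
  have hpos : 0 < ∑ i, ‖v i j - v i l‖ ^ 2 :=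
    Finset.sum_pos' (fun _ _ => by positivity)
      ⟨i, Finset.mem_univ i, pow_pos (norm_pos_iff.2 (sub_ne_zero.2 hi)) 2⟩
  rw [re_lindbladBlockEigenvalue]
  linarith

lemma tendsto_cexp_mul_lindbladBlockEigenvalue_smul {E : Type*} [NormedAddCommGroup E]
    [NormedSpace ℂ E] [DecidableEq ι] {j l : ι} {x : E}
    (hv : j ≠ l → x ≠ 0 → ∃ i, v i j ≠ v i l) :
    Filter.Tendsto (fun t : ℝ => Complex.exp (t * lindbladBlockEigenvalue h v j l) • x)
      Filter.atTop (nhds (if j = l then x else 0)) := by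
  by_cases hjl : j = l
  · subst hjl
    simp [lindbladBlockEigenvalue_self]
  by_cases hx : x = 0
  · simp [hx]
  rw [if_neg hjl]
  exact tendsto_cexp_mul_smul_atTop_zero (re_lindbladBlockEigenvalue_neg h v (hv hjl hx)) x

end BlockEigenvalue

lemma lindblad_mul_mul {ι : Type*} [Fintype ι] {n k : ℕ} {P : ι → Matrix (Fin n) (Fin n) ℂ}
    (hP : OrthogonalIdempotents P) (hPherm : ∀ j, (P j).IsHermitian)
    {H : Matrix (Fin n) (Fin n) ℂ} {h : ι → ℝ} (hH : H = ∑ j, (h j : ℂ) • P j)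
    {V : Fin k → Matrix (Fin n) (Fin n) ℂ} {v : Fin k → ι → ℂ}
    (hV : ∀ i, V i = ∑ j, v i j • P j) (X : Matrix (Fin n) (Fin n) ℂ) (j l : ι) :
    lindblad H V (P j * X * P l) = lindbladBlockEigenvalue h v j l • (P j * X * P l) := by
  have hVH : ∀ i, (V i)ᴴ = ∑ j, conj (v i j) • P j := fun i => by
    simp [hV, conjTranspose_sum, conjTranspose_smul, (hPherm _).eq]
  have lmul : ∀ c : ι → ℂ, (∑ i, c i • P i) * (P j * X * P l) = c j • (P j * X * P l) :=
    fun c => hP.sum_smul_mul_mul_mul c j l X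
  have rmul : ∀ c : ι → ℂ, P j * X * P l * (∑ i, c i • P i) = c l • (P j * X * P l) :=
    fun c => hP.mul_mul_mul_sum_smul c j l X
  generalize P j * X * P l = B at lmul rmul ⊢
  have hjump : ∀ i, V i * B * (V i)ᴴ = (v i j * conj (v i l)) • B := fun i => by
    rw [hVH, hV, lmul, smul_mul_assoc, rmul, smul_smul]
  have hleft : ∀ i, (V i)ᴴ * V i * B = (conj (v i j) * v i j) • B := fun i => by
    rw [hVH, hV, mul_assoc, lmul, mul_smul_comm, lmul, smul_smul, mul_comm]
  have hright : ∀ i, B * ((V i)ᴴ * V i) = (conj (v i l) * v i l) • B := fun i => by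
    rw [hVH, hV, ← mul_assoc, rmul, smul_mul_assoc, rmul, smul_smul]
  simp only [lindblad, hjump, hleft, hright, hH, lmul, rmul, lindbladBlockEigenvalue]
  rw [add_smul, Finset.sum_smul]
  congr 1
  · module
  · exact Finset.sum_congr rfl fun i _ => by module

theorem relaxation_center_eq_commutant_of_algebra_general {n k : ℕ}
    (H : Matrix (Fin n) (Fin n) ℂ) (hH : H.IsHermitian)
    (V : Fin k → Matrix (Fin n) (Fin n) ℂ)
    (L : Matrix (Fin n) (Fin n) ℂ →ₗ[ℂ] Matrix (Fin n) (Fin n) ℂ)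
    (hL : ∀ ρ, L ρ = lindblad H V ρ)
    -- `M` is the commutant of `{H, Vᵢ}`, assumed to coincide with the
    -- commutant of `{Vᵢ}`
    (hMeq : {M : Matrix (Fin n) (Fin n) ℂ |
        M * H = H * M ∧ ∀ i, M * V i = V i * M} =
      {M : Matrix (Fin n) (Fin n) ℂ | ∀ i, M * V i = V i * M})
    (m : ℕ) (P : Fin m → Matrix (Fin n) (Fin n) ℂ)
    (hPherm : ∀ j, (P j).IsHermitian)
    (hPidem : ∀ j, P j * P j = P j)
    (hPorth : ∀ j l, j ≠ l → P j * P l = 0)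
    (hPsum : ∑ j, P j = (1 : Matrix (Fin n) (Fin n) ℂ))
    -- the commutant `M′` of `M` is spanned by the projectors `P j`,
    -- i.e. `Z = M ∩ M′ = M′`
    (hM'span : {N : Matrix (Fin n) (Fin n) ℂ |
        ∀ M ∈ {M : Matrix (Fin n) (Fin n) ℂ |
          M * H = H * M ∧ ∀ i, M * V i = V i * M}, N * M = M * N} =
      ↑(Submodule.span ℂ (Set.range P)))
    (ρ : Matrix (Fin n) (Fin n) ℂ) :
    Filter.Tendsto
      (fun t : ℝ => (@NormedSpace.exp _ _ _
        (@NonUnitalSeminormedRing.toIsTopologicalRing _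
          (@NonUnitalNormedRing.toNonUnitalSeminormedRing _
            (@NormedRing.toNonUnitalNormedRing _ ContinuousLinearMap.toNormedRing)))
        (t • L.toContinuousLinearMap)) ρ)
      Filter.atTop (nhds (∑ j, P j * ρ * P j)) := by
  have hP : CompleteOrthogonalIdempotents P := ⟨⟨hPidem, fun j l hjl => hPorth j l hjl⟩, hPsum⟩
  have mem_span : ∀ N, (∀ M, M * H = H * M ∧ (∀ i, M * V i = V i * M) → N * M = M * N) →
      N ∈ Submodule.span ℂ (Set.range P) := fun N hN => by
    rw [← SetLike.mem_coe, ← hM'span]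
    exact hN
  obtain ⟨h₀, hH₀⟩ :=
    (Submodule.mem_span_range_iff_exists_fun ℂ).1 (mem_span H fun M hM => hM.1.symm)
  obtain ⟨h, hHsum⟩ : ∃ h : Fin m → ℝ, H = ∑ j, (h j : ℂ) • P j :=
    ⟨_, sum_re_smul_eq_of_isSelfAdjoint hPherm hH hH₀.symm⟩
  choose v hv using fun i => (Submodule.mem_span_range_iff_exists_fun ℂ).1
    (mem_span (V i) fun M hM => (hM.2 i).symm)
  have hsep : ∀ j l, j ≠ l → P j * ρ * P l ≠ 0 → ∃ i, v i j ≠ v i l := fun j l hjl =>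
    hP.1.exists_ne_of_mul_mul_ne_zero (fun i => (hv i).symm) hjl fun E hE => by
      have hEM : E ∈ {M | M * H = H * M ∧ ∀ i, M * V i = V i * M} := hMeq ▸ hE
      have hPj : P j ∈ {N | ∀ M ∈ {M | M * H = H * M ∧ ∀ i, M * V i = V i * M},
          N * M = M * N} := hM'span ▸ Submodule.subset_span ⟨j, rfl⟩
      exact hPj E hEM
  have hsum := tendsto_finsetSum Finset.univ fun j _ => tendsto_finsetSum Finset.univ fun l _ =>
    tendsto_cexp_mul_lindbladBlockEigenvalue_smul h v (x := P j * ρ * P l) (hsep j l)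
  simp only [Finset.sum_ite_eq, Finset.mem_univ, if_true] at hsum
  refine hsum.congr fun t => ?_
  conv_rhs => rw [← hP.sum_sum_mul_mul ρ]
  simp only [map_sum]
  refine Finset.sum_congr rfl fun j _ => Finset.sum_congr rfl fun l _ =>
    (exp_real_smul_apply_of_apply_eq_smul ?_ t).symm
  exact (hL _).trans (lindblad_mul_mul hP.1 hPherm hHsum (fun i => (hv i).symm) ρ j l)

theorem relaxation_center_eq_commutant_of_algebra {n k : ℕ} (hn : 1 ≤ n)
    (H : Matrix (Fin n) (Fin n) ℂ) (hH : H.IsHermitian)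
    (V : Fin k → Matrix (Fin n) (Fin n) ℂ)
    -- the family `(Vᵢ)` is closed under conjugate transpose
    (hVstar : ∀ i, ∃ j, V j = (V i)ᴴ)
    (L : Matrix (Fin n) (Fin n) ℂ →ₗ[ℂ] Matrix (Fin n) (Fin n) ℂ)
    (hL : ∀ ρ, L ρ = lindblad H V ρ)
    -- `M` is the commutant of `{H, Vᵢ}`, assumed to coincide with the
    -- commutant of `{Vᵢ}`
    (hMeq : {M : Matrix (Fin n) (Fin n) ℂ |
        M * H = H * M ∧ ∀ i, M * V i = V i * M} =
      {M : Matrix (Fin n) (Fin n) ℂ | ∀ i, M * V i = V i * M})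
    (ρ₀ : Matrix (Fin n) (Fin n) ℂ)
    (h₀pos : ρ₀.PosDef) (h₀tr : ρ₀.trace = 1)
    (h₀stat : lindblad H V ρ₀ = 0)
    (m : ℕ) (P : Fin m → Matrix (Fin n) (Fin n) ℂ)
    (hPherm : ∀ j, (P j).IsHermitian)
    (hPidem : ∀ j, P j * P j = P j)
    (hPorth : ∀ j l, j ≠ l → P j * P l = 0)
    (hPsum : ∑ j, P j = (1 : Matrix (Fin n) (Fin n) ℂ))
    -- the commutant `M′` of `M` is spanned by the projectors `P j`,
    -- i.e. `Z = M ∩ M′ = M′`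
    (hM'span : {N : Matrix (Fin n) (Fin n) ℂ |
        ∀ M ∈ {M : Matrix (Fin n) (Fin n) ℂ |
          M * H = H * M ∧ ∀ i, M * V i = V i * M}, N * M = M * N} =
      ↑(Submodule.span ℂ (Set.range P)))
    (ρ : Matrix (Fin n) (Fin n) ℂ) (hρ : ρ.PosSemidef) (htr : ρ.trace = 1) :
    Filter.Tendsto
      (fun t : ℝ => (@NormedSpace.exp _ _ _
        (@NonUnitalSeminormedRing.toIsTopologicalRing _
          (@NonUnitalNormedRing.toNonUnitalSeminormedRing _
            (@NormedRing.toNonUnitalNormedRing _ ContinuousLinearMap.toNormedRing)))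
        (t • L.toContinuousLinearMap)) ρ)
      Filter.atTop (nhds (∑ j, P j * ρ * P j)) :=
  relaxation_center_eq_commutant_of_algebra_general H hH V L hL hMeq m P hPherm hPidem hPorth hPsum
    hM'span ρ
end

section
/- The set of 4×4 complex matrices M that commute with I₂⊗σ₃ + σ₃⊗I₂ is exactly the ℂ-linear span of the six matrices I₂⊗I₂, I₂⊗σ₃, σ₃⊗I₂, σ₃⊗σ₃, Ω⁺, and σ₁⊗σ₂ − σ₂⊗σ₁. -/
open Matrix
open scoped Kronecker ComplexOrder

/-- The first Pauli matrix. -/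
noncomputable def σ1 : Matrix (Fin 2) (Fin 2) ℂ := !![0, 1; 1, 0]

/-- The second Pauli matrix. -/
noncomputable def σ2 : Matrix (Fin 2) (Fin 2) ℂ := !![0, -Complex.I; Complex.I, 0]

/-- The third Pauli matrix. -/
noncomputable def σ3 : Matrix (Fin 2) (Fin 2) ℂ := !![1, 0; 0, -1]

/-- The 2×2 identity matrix. -/
noncomputable def I2 : Matrix (Fin 2) (Fin 2) ℂ := 1

/-!
Since `σ₃ = diag(1, -1)`, the matrix `I₂⊗σ₃ + σ₃⊗I₂` is diagonal with entries `2, 0, 0, -2` on the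
basis `00, 01, 10, 11`. A matrix commutes with a diagonal matrix exactly when it vanishes at the
entries whose two diagonal values differ, so the commutant consists of the matrices supported on
`{00}`, `{11}` and the middle block `{01, 10}`, which is six-dimensional. Each generator lies in
it, and conversely such a matrix is an explicit combination of the generators: the diagonal is
spanned by the four products of `I₂` and `σ₃`, while on the middle block
`Ω⁺ - σ₃⊗σ₃ = 2 (E₀₁,₁₀ + E₁₀,₀₁)` and `σ₁⊗σ₂ - σ₂⊗σ₁ = 2i (E₀₁,₁₀ - E₁₀,₀₁)`.
-/

theorem Matrix.commute_diagonal_iff {n R : Type*} [Fintype n] [DecidableEq n] [CommRing R]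
    [NoZeroDivisors R] {M : Matrix n n R} {d : n → R} :
    Commute M (diagonal d) ↔ ∀ i j, d i ≠ d j → M i j = 0 := by
  simp only [commute_iff_eq, ← Matrix.ext_iff, mul_diagonal, diagonal_mul]
  refine forall₂_congr fun i j => ?_
  rw [mul_comm, ← sub_eq_zero, ← sub_mul, mul_eq_zero, sub_eq_zero, eq_comm, or_iff_not_imp_left]

def spin : Fin 2 → ℂ := ![1, -1]

theorem σ3_eq_diagonal : σ3 = diagonal spin := by
  ext i j
  fin_cases i <;> fin_cases j <;> simp [σ3, spin]

theorem commute_Vplus_iff {M : Matrix (Fin 2 × Fin 2) (Fin 2 × Fin 2) ℂ} :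
    Commute M (I2 ⊗ₖ σ3 + σ3 ⊗ₖ I2) ↔
      ∀ p q, spin p.1 + spin p.2 ≠ spin q.1 + spin q.2 → M p q = 0 := by
  rw [add_comm, σ3_eq_diagonal, I2, ← diagonal_one, diagonal_kronecker_diagonal,
    diagonal_kronecker_diagonal, diagonal_add, commute_diagonal_iff]
  simp only [one_mul, mul_one]

theorem eq_pauli_combination_of_commute_Vplus {M : Matrix (Fin 2 × Fin 2) (Fin 2 × Fin 2) ℂ}
    (hM : Commute M (I2 ⊗ₖ σ3 + σ3 ⊗ₖ I2)) :
    M = ((M (0,0) (0,0) + M (0,1) (0,1) + M (1,0) (1,0) + M (1,1) (1,1)) / 4) • (I2 ⊗ₖ I2)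
        + ((M (0,0) (0,0) - M (0,1) (0,1) + M (1,0) (1,0) - M (1,1) (1,1)) / 4) • (I2 ⊗ₖ σ3)
        + ((M (0,0) (0,0) + M (0,1) (0,1) - M (1,0) (1,0) - M (1,1) (1,1)) / 4) • (σ3 ⊗ₖ I2)
        + ((M (0,0) (0,0) - M (0,1) (0,1) - M (1,0) (1,0) + M (1,1) (1,1)
            - M (0,1) (1,0) - M (1,0) (0,1)) / 4) • (σ3 ⊗ₖ σ3)
        + ((M (0,1) (1,0) + M (1,0) (0,1)) / 4) • (σ1 ⊗ₖ σ1 + σ2 ⊗ₖ σ2 + σ3 ⊗ₖ σ3)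
        + ((M (1,0) (0,1) - M (0,1) (1,0)) * Complex.I / 4) • (σ1 ⊗ₖ σ2 - σ2 ⊗ₖ σ1) := by
  have hblock := commute_Vplus_iff.mp hM
  ext ⟨i, j⟩ ⟨k, l⟩
  fin_cases i <;> fin_cases j <;> fin_cases k <;> fin_cases l <;>
    simp [σ1, σ2, σ3, I2, one_apply] <;>
    first
    | exact hblock _ _ (by norm_num [spin])
    | ring1
    | (ring_nf; rw [Complex.I_sq]; ring1)

theorem commutant_of_Vplus :
    {M : Matrix (Fin 2 × Fin 2) (Fin 2 × Fin 2) ℂ |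
      M * (I2 ⊗ₖ σ3 + σ3 ⊗ₖ I2) = (I2 ⊗ₖ σ3 + σ3 ⊗ₖ I2) * M} =
    ↑(Submodule.span ℂ
      ({I2 ⊗ₖ I2, I2 ⊗ₖ σ3, σ3 ⊗ₖ I2, σ3 ⊗ₖ σ3,
        σ1 ⊗ₖ σ1 + σ2 ⊗ₖ σ2 + σ3 ⊗ₖ σ3,
        σ1 ⊗ₖ σ2 - σ2 ⊗ₖ σ1} : Set (Matrix (Fin 2 × Fin 2) (Fin 2 × Fin 2) ℂ))) := by
  refine Set.Subset.antisymm (fun M hM => ?_) (fun M hM => ?_)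
  · rw [SetLike.mem_coe, eq_pauli_combination_of_commute_Vplus hM]
    refine add_mem (add_mem (add_mem (add_mem (add_mem ?_ ?_) ?_) ?_) ?_) ?_ <;>
      exact Submodule.smul_mem _ _ (Submodule.subset_span (by simp))
  · induction hM using Submodule.span_induction with
    | mem G hG =>
      rcases hG with rfl | rfl | rfl | rfl | rfl | rfl <;>
        refine commute_Vplus_iff.mpr fun ⟨i, j⟩ ⟨k, l⟩ => ?_ <;>
        fin_cases i <;> fin_cases j <;> fin_cases k <;> fin_cases l <;>
        norm_num [spin, σ1, σ2, σ3, I2]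
    | zero => exact Commute.zero_left _
    | add _ _ _ _ h₁ h₂ => exact Commute.add_left h₁ h₂
    | smul c _ _ h => exact Commute.smul_left h c
end

section
/- Let β₁, β₂, γ be real numbers with sin(2γ) ≠ 0, sin(β₁ − β₂) ≠ 0, and cos²γ·e^{2iβ₁} + sin²γ·e^{2iβ₂} ≠ 0, and set σ̃ = e^{iβ₁}cos(γ)·σ₁ + e^{iβ₂}sin(γ)·σ₂ and V = I₂⊗σ̃ + σ̃⊗I₂. Then the set of 4×4 complex matrices commuting with both V and V* is exactly the ℂ-linear span of I₂⊗I₂ and Ω⁺. -/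
open Matrix
open scoped Kronecker ComplexOrder

/-!
Write `V = I₂ ⊗ σ̃ + σ̃ ⊗ I₂` as `p X + q Y`, where `X, Y` are the same construction applied to
the raising and lowering matrices `σ⁺, σ⁻` and `p = a - i b`, `q = a + i b` for
`σ̃ = a σ₁ + b σ₂`. Then `V* = q̄ X + p̄ Y`, and `|p|² - |q|² = -2 sin(β₁ - β₂) sin 2γ ≠ 0`, so
`V, V*` span the same space as `X, Y` and have the same commutant. `X` and `Y` generate the
action of `sl₂` on `ℂ² ⊗ ℂ²`, whose commutant is spanned by the identity and the swap
`(I₂ ⊗ I₂ + Ω⁺) / 2`; this last step is a direct computation on the entries.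
-/

open ComplexConjugate

namespace Matrix

variable {R n : Type*} [CommSemiring R] [DecidableEq n]

def kroneckerSumSelf (A : Matrix n n R) : Matrix (n × n) (n × n) R := 1 ⊗ₖ A + A ⊗ₖ 1

lemma kroneckerSumSelf_add (A B : Matrix n n R) :
    kroneckerSumSelf (A + B) = kroneckerSumSelf A + kroneckerSumSelf B := by
  simp only [kroneckerSumSelf, kronecker_add, add_kronecker]
  abel

lemma kroneckerSumSelf_smul (c : R) (A : Matrix n n R) :
    kroneckerSumSelf (c • A) = c • kroneckerSumSelf A := by
  simp only [kroneckerSumSelf, kronecker_smul, smul_kronecker, smul_add]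

lemma conjTranspose_kroneckerSumSelf [StarRing R] (A : Matrix n n R) :
    (kroneckerSumSelf A)ᴴ = kroneckerSumSelf Aᴴ := by
  simp only [kroneckerSumSelf, conjTranspose_add, conjTranspose_kronecker, conjTranspose_one]

end Matrix

theorem Submodule.span_pair_eq_of_det_ne_zero {K M : Type*} [Field K] [AddCommGroup M]
    [Module K M] (x y : M) {a b c d : K} (h : a * d - b * c ≠ 0) :
    span K {a • x + b • y, c • x + d • y} = span K {x, y} := by
  apply le_antisymm
  · rw [span_le]
    rintro _ (rfl | rfl) <;> rw [SetLike.mem_coe, mem_span_pair]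
    exacts [⟨a, b, rfl⟩, ⟨c, d, rfl⟩]
  · have of_det_smul_mem {z : M}
        (hz : (a * d - b * c) • z ∈ span K {a • x + b • y, c • x + d • y}) :
        z ∈ span K {a • x + b • y, c • x + d • y} := by
      simpa [inv_smul_smul₀ h] using smul_mem _ (a * d - b * c)⁻¹ hz
    rw [span_le]
    rintro _ (rfl | rfl) <;> apply of_det_smul_mem <;> rw [mem_span_pair]
    exacts [⟨d, -b, by module⟩, ⟨-c, a, by module⟩]

theorem Set.centralizer_subset_of_subset_span {R A : Type*} [CommSemiring R] [Semiring A]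
    [Algebra R A] {s t : Set A} (h : s ⊆ Submodule.span R t) :
    t.centralizer ⊆ s.centralizer := by
  intro c hc x hx
  have hspan : Submodule.span R t ≤ Subalgebra.toSubmodule (Subalgebra.centralizer R {c}) :=
    Submodule.span_le.mpr fun y hy => by
      simpa [Set.mem_centralizer_iff] using (hc y hy).symm
  exact ((Subalgebra.mem_centralizer_iff R).mp (hspan (h hx)) c rfl).symm

theorem Set.centralizer_eq_of_span_eq {R A : Type*} [CommSemiring R] [Semiring A]
    [Algebra R A] {s t : Set A} (h : Submodule.span R s = Submodule.span R t) :
    s.centralizer = t.centralizer :=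
  (centralizer_subset_of_subset_span (h.symm ▸ Submodule.subset_span)).antisymm
    (centralizer_subset_of_subset_span (h ▸ Submodule.subset_span))

lemma Complex.mul_conj_sub_mul_conj_eq_im (a b : ℂ) :
    (a - I * b) * conj (a - I * b) - (a + I * b) * conj (a + I * b) = -4 * (a * conj b).im := by
  have h := Complex.sub_conj (a * conj b)
  rw [map_mul, Complex.conj_conj] at h
  simp only [map_sub, map_add, map_mul, Complex.conj_I]
  linear_combination (norm := (push_cast; ring)) (2 * I) * h + 4 * (a * conj b).im * I_sq

lemma im_exp_mul_cos_mul_conj_exp_mul_sin (β₁ β₂ γ : ℝ) :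
    (Complex.exp (Complex.I * β₁) * Real.cos γ *
        conj (Complex.exp (Complex.I * β₂) * Real.sin γ)).im =
      Real.sin (β₁ - β₂) * Real.sin (2 * γ) / 2 := by
  rw [Real.sin_two_mul, Real.sin_sub]
  simp [Complex.exp_re, Complex.exp_im, Complex.cos_ofReal_re, Complex.sin_ofReal_re]
  ring

noncomputable def σplus : Matrix (Fin 2) (Fin 2) ℂ := !![0, 1; 0, 0]

noncomputable def σminus : Matrix (Fin 2) (Fin 2) ℂ := !![0, 0; 1, 0]

lemma conjTranspose_σplus : σplusᴴ = σminus := by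
  ext i j
  fin_cases i <;> fin_cases j <;> simp [σplus, σminus]

lemma conjTranspose_σminus : σminusᴴ = σplus := by
  rw [← conjTranspose_σplus, conjTranspose_conjTranspose]

lemma smul_σ1_add_smul_σ2 (a b : ℂ) :
    a • σ1 + b • σ2 = (a - Complex.I * b) • σplus + (a + Complex.I * b) • σminus := by
  ext i j
  fin_cases i <;> fin_cases j <;> simp [σ1, σ2, σplus, σminus] <;> ring

noncomputable def omegaPlus : Matrix (Fin 2 × Fin 2) (Fin 2 × Fin 2) ℂ :=
  σ1 ⊗ₖ σ1 + σ2 ⊗ₖ σ2 + σ3 ⊗ₖ σ3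

lemma omegaPlus_commute_kroneckerSumSelf (A : Matrix (Fin 2) (Fin 2) ℂ) :
    Commute omegaPlus (kroneckerSumSelf A) := by
  ext ⟨i, j⟩ ⟨k, l⟩
  fin_cases i <;> fin_cases j <;> fin_cases k <;> fin_cases l <;>
    simp [omegaPlus, kroneckerSumSelf, mul_apply, Fintype.sum_prod_type, σ1, σ2, σ3, one_apply] <;>
    ring

lemma eq_smul_add_smul_omegaPlus_of_mem_centralizer {M : Matrix (Fin 2 × Fin 2) (Fin 2 × Fin 2) ℂ}
    (hM : M ∈ Set.centralizer {kroneckerSumSelf σplus, kroneckerSumSelf σminus}) :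
    M = (M (0, 1) (0, 1) + M (0, 1) (1, 0) / 2) • (I2 ⊗ₖ I2) + (M (0, 1) (1, 0) / 2) • omegaPlus := by
  have hplus := congrFun₂ (hM _ (Set.mem_insert _ _))
  have hminus := congrFun₂ (hM _ (Set.mem_insert_of_mem _ rfl))
  simp [kroneckerSumSelf, σplus, σminus, mul_apply, Fintype.sum_prod_type, one_apply,
    Prod.forall] at hplus hminus
  ext ⟨i, j⟩ ⟨k, l⟩
  fin_cases i <;> fin_cases j <;> fin_cases k <;> fin_cases l <;>
    simp [omegaPlus, I2, σ1, σ2, σ3, one_apply] <;> grind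

theorem centralizer_kroneckerSumSelf_σplus_σminus :
    Set.centralizer {kroneckerSumSelf σplus, kroneckerSumSelf σminus} =
      (Submodule.span ℂ {I2 ⊗ₖ I2, omegaPlus} : Set (Matrix (Fin 2 × Fin 2) (Fin 2 × Fin 2) ℂ)) := by
  apply subset_antisymm
  · intro M hM
    exact Submodule.mem_span_pair.mpr ⟨_, _, (eq_smul_add_smul_omegaPlus_of_mem_centralizer hM).symm⟩
  · have hspan : Submodule.span ℂ {I2 ⊗ₖ I2, omegaPlus} ≤ Subalgebra.toSubmodule
        (Subalgebra.centralizer ℂ {kroneckerSumSelf σplus, kroneckerSumSelf σminus}) := by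
      rw [Submodule.span_le]
      rintro _ (rfl | rfl) _ (rfl | rfl)
      all_goals first
        | simp [I2]
        | exact (omegaPlus_commute_kroneckerSumSelf _).symm.eq
    exact hspan

theorem commutant_of_nonhermitian_Vplus_general (β₁ β₂ γ : ℝ)
    (h2γ : Real.sin (2 * γ) ≠ 0)
    (hβ : Real.sin (β₁ - β₂) ≠ 0) :
    let σt : Matrix (Fin 2) (Fin 2) ℂ :=
      (Complex.exp (Complex.I * β₁) * Real.cos γ) • σ1 +
        (Complex.exp (Complex.I * β₂) * Real.sin γ) • σ2
    let V : Matrix (Fin 2 × Fin 2) (Fin 2 × Fin 2) ℂ := I2 ⊗ₖ σt + σt ⊗ₖ I2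
    {M : Matrix (Fin 2 × Fin 2) (Fin 2 × Fin 2) ℂ |
      M * V = V * M ∧ M * Vᴴ = Vᴴ * M} =
    ↑(Submodule.span ℂ
      ({I2 ⊗ₖ I2, σ1 ⊗ₖ σ1 + σ2 ⊗ₖ σ2 + σ3 ⊗ₖ σ3} :
        Set (Matrix (Fin 2 × Fin 2) (Fin 2 × Fin 2) ℂ))) := by
  intro σt V
  set a : ℂ := Complex.exp (Complex.I * β₁) * Real.cos γ
  set b : ℂ := Complex.exp (Complex.I * β₂) * Real.sin γ
  set p := a - Complex.I * b
  set q := a + Complex.I * b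
  have hV : V = p • kroneckerSumSelf σplus + q • kroneckerSumSelf σminus := by
    rw [← kroneckerSumSelf_smul, ← kroneckerSumSelf_smul, ← kroneckerSumSelf_add,
      ← smul_σ1_add_smul_σ2]
    rfl
  have hVH : Vᴴ = conj q • kroneckerSumSelf σplus + conj p • kroneckerSumSelf σminus := by
    rw [hV, conjTranspose_add, conjTranspose_smul, conjTranspose_smul,
      conjTranspose_kroneckerSumSelf, conjTranspose_kroneckerSumSelf, conjTranspose_σplus,
      conjTranspose_σminus, add_comm]
    rfl
  have hdet : p * conj p - q * conj q ≠ 0 := by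
    rw [Complex.mul_conj_sub_mul_conj_eq_im, im_exp_mul_cos_mul_conj_exp_mul_sin]
    exact mul_ne_zero (by norm_num)
      (Complex.ofReal_ne_zero.mpr (div_ne_zero (mul_ne_zero hβ h2γ) two_ne_zero))
  calc _ = Set.centralizer {V, Vᴴ} := by
        ext M
        simp [Set.mem_centralizer_iff, eq_comm]
    _ = Set.centralizer {kroneckerSumSelf σplus, kroneckerSumSelf σminus} := by
        apply Set.centralizer_eq_of_span_eq (R := ℂ)
        rw [hVH, hV]
        exact Submodule.span_pair_eq_of_det_ne_zero _ _ hdet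
    _ = _ := centralizer_kroneckerSumSelf_σplus_σminus

theorem commutant_of_nonhermitian_Vplus (β₁ β₂ γ : ℝ)
    (h2γ : Real.sin (2 * γ) ≠ 0)
    (hβ : Real.sin (β₁ - β₂) ≠ 0)
    (hc : (Real.cos γ : ℂ) ^ 2 * Complex.exp (2 * Complex.I * β₁) +
        (Real.sin γ : ℂ) ^ 2 * Complex.exp (2 * Complex.I * β₂) ≠ 0) :
    let σt : Matrix (Fin 2) (Fin 2) ℂ :=
      (Complex.exp (Complex.I * β₁) * Real.cos γ) • σ1 +
        (Complex.exp (Complex.I * β₂) * Real.sin γ) • σ2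
    let V : Matrix (Fin 2 × Fin 2) (Fin 2 × Fin 2) ℂ := I2 ⊗ₖ σt + σt ⊗ₖ I2
    {M : Matrix (Fin 2 × Fin 2) (Fin 2 × Fin 2) ℂ |
      M * V = V * M ∧ M * Vᴴ = Vᴴ * M} =
    ↑(Submodule.span ℂ
      ({I2 ⊗ₖ I2, σ1 ⊗ₖ σ1 + σ2 ⊗ₖ σ2 + σ3 ⊗ₖ σ3} :
        Set (Matrix (Fin 2 × Fin 2) (Fin 2 × Fin 2) ℂ))) :=
  commutant_of_nonhermitian_Vplus_general β₁ β₂ γ h2γ hβ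
end

section
/- Let β₁, β₂, γ be real numbers with sin(2γ) ≠ 0 and sin(β₁ − β₂) ≠ 0, set σ̃ = e^{iβ₁}cos(γ)·σ₁ + e^{iβ₂}sin(γ)·σ₂ and V = I₂⊗σ̃ + σ̃⊗I₂. Then there is no positive definite 4×4 matrix ρ satisfying V ρ V* − (1/2)(V*V ρ + ρ V*V) = 0: every positive semidefinite matrix ρ satisfying this equation has det ρ = 0. -/
/-!
With `a = e^{iβ₁} cos γ` and `b = e^{iβ₂} sin γ`, the matrix `σ̃` is antidiagonal with entries
`p = a - i b` and `q = a + i b`, and `v = p e₀₀ - q e₁₁` lies in the kernel of `V`.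
Sandwiching the stationarity equation between `v*` and `v` kills both anticommutator terms and
leaves `⟨V* v, ρ V* v⟩ = 0`, so a positive semidefinite stationary `ρ` annihilates `V* v`.
The `(0,1)` entry of `V* v` is `|p|² - |q|² = -2 sin(β₁ - β₂) sin 2γ ≠ 0`, hence `ρ` is singular.
-/

open Matrix
open scoped Kronecker ComplexOrder

section Lindblad

variable {𝕜 n : Type*} [RCLike 𝕜] [Fintype n]

theorem Matrix.PosSemidef.mulVec_conjTranspose_mulVec_eq_zero_of_lindblad_stationary
    {ρ V : Matrix n n 𝕜} {v : n → 𝕜} (hρ : ρ.PosSemidef)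
    (hE : V * ρ * Vᴴ - (1 / 2 : 𝕜) • (Vᴴ * V * ρ + ρ * (Vᴴ * V)) = 0)
    (hv : V *ᵥ v = 0) : ρ *ᵥ (Vᴴ *ᵥ v) = 0 := by
  have hvV : star v ᵥ* Vᴴ = 0 := by rw [← star_mulVec, hv, star_zero]
  have hjump : star v ⬝ᵥ (V * ρ * Vᴴ) *ᵥ v = star (Vᴴ *ᵥ v) ⬝ᵥ ρ *ᵥ (Vᴴ *ᵥ v) := by
    rw [← mulVec_mulVec, ← mulVec_mulVec, dotProduct_mulVec, star_mulVec,
      conjTranspose_conjTranspose]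
  have hleft : star v ⬝ᵥ (Vᴴ * V * ρ) *ᵥ v = 0 := by
    rw [Matrix.mul_assoc, ← mulVec_mulVec, dotProduct_mulVec, hvV, zero_dotProduct]
  have hright : star v ⬝ᵥ (ρ * (Vᴴ * V)) *ᵥ v = 0 := by
    rw [← mulVec_mulVec, ← mulVec_mulVec, hv, mulVec_zero, mulVec_zero, dotProduct_zero]
  have h := congrArg (fun M => star v ⬝ᵥ M *ᵥ v) hE
  simp only [sub_mulVec, smul_mulVec, add_mulVec, dotProduct_sub, dotProduct_smul,
    dotProduct_add, zero_mulVec, dotProduct_zero, hjump, hleft, hright, add_zero, smul_zero,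
    sub_zero] at h
  exact (hρ.dotProduct_mulVec_zero_iff _).mp h

theorem Matrix.PosSemidef.det_eq_zero_of_lindblad_stationary [DecidableEq n]
    {ρ V : Matrix n n 𝕜} {v : n → 𝕜} (hρ : ρ.PosSemidef)
    (hE : V * ρ * Vᴴ - (1 / 2 : 𝕜) • (Vᴴ * V * ρ + ρ * (Vᴴ * V)) = 0)
    (hv : V *ᵥ v = 0) (hw : Vᴴ *ᵥ v ≠ 0) : ρ.det = 0 :=
  exists_mulVec_eq_zero_iff.mp
    ⟨_, hw, hρ.mulVec_conjTranspose_mulVec_eq_zero_of_lindblad_stationary hE hv⟩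

end Lindblad

section KroneckerSum

variable {R : Type*} [CommRing R] (p q : R)

theorem kroneckerSum_antidiag_mulVec_singlet :
    ((1 : Matrix (Fin 2) (Fin 2) R) ⊗ₖ !![0, p; q, 0] + !![0, p; q, 0] ⊗ₖ 1) *ᵥ
      (Pi.single (0, 0) p - Pi.single (1, 1) q) = 0 := by
  ext ⟨i, j⟩
  fin_cases i <;> fin_cases j <;>
    simp [mulVec, dotProduct, Fintype.sum_prod_type, Pi.single_apply, one_apply] <;> ring

theorem conjTranspose_kroneckerSum_antidiag_mulVec_singlet_apply [StarRing R] :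
    (((1 : Matrix (Fin 2) (Fin 2) R) ⊗ₖ !![0, p; q, 0] + !![0, p; q, 0] ⊗ₖ 1)ᴴ *ᵥ
      (Pi.single (0, 0) p - Pi.single (1, 1) q)) (0, 1) = star p * p - star q * q := by
  simp [mulVec, dotProduct, Fintype.sum_prod_type, Pi.single_apply, one_apply,
    conjTranspose_apply, sub_eq_add_neg]

end KroneckerSum

theorem Complex.star_sub_I_mul_sub_star_add_I_mul (a b : ℂ) :
    star (a - I * b) * (a - I * b) - star (a + I * b) * (a + I * b) =
      ((4 * (star a * b).im : ℝ) : ℂ) := by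
  apply Complex.ext <;> simp <;> ring

theorem Complex.im_star_exp_mul_exp (β₁ β₂ r s : ℝ) :
    (star (exp (I * β₁) * r) * (exp (I * β₂) * s)).im = Real.sin (β₂ - β₁) * r * s := by
  have : star (exp (I * β₁) * r) * (exp (I * β₂) * s) = exp (↑(β₂ - β₁) * I) * ↑(r * s) := by
    simp only [star_mul', star_def, ← exp_conj, map_mul, conj_I, conj_ofReal]
    rw [mul_mul_mul_comm, ← exp_add]
    push_cast; ring_nf
  rw [this, im_mul_ofReal, exp_ofReal_mul_I_im]; ring

theorem no_maximal_rank_stationary_state_case_II (β₁ β₂ γ : ℝ)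
    (h2γ : Real.sin (2 * γ) ≠ 0)
    (hβ : Real.sin (β₁ - β₂) ≠ 0) :
    let σt : Matrix (Fin 2) (Fin 2) ℂ :=
      (Complex.exp (Complex.I * β₁) * Real.cos γ) • σ1 +
        (Complex.exp (Complex.I * β₂) * Real.sin γ) • σ2
    let V : Matrix (Fin 2 × Fin 2) (Fin 2 × Fin 2) ℂ := I2 ⊗ₖ σt + σt ⊗ₖ I2
    (¬ ∃ ρ : Matrix (Fin 2 × Fin 2) (Fin 2 × Fin 2) ℂ, ρ.PosDef ∧
        V * ρ * Vᴴ - (1 / 2 : ℂ) • (Vᴴ * V * ρ + ρ * (Vᴴ * V)) = 0) ∧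
      ∀ ρ : Matrix (Fin 2 × Fin 2) (Fin 2 × Fin 2) ℂ, ρ.PosSemidef →
        V * ρ * Vᴴ - (1 / 2 : ℂ) • (Vᴴ * V * ρ + ρ * (Vᴴ * V)) = 0 →
        ρ.det = 0 := by
  intro σt V
  set a : ℂ := Complex.exp (Complex.I * β₁) * Real.cos γ
  set b : ℂ := Complex.exp (Complex.I * β₂) * Real.sin γ
  set p := a - Complex.I * b
  set q := a + Complex.I * b
  have hσt : σt = !![0, p; q, 0] := by
    ext i j
    fin_cases i <;> fin_cases j <;> simp [σt, σ1, σ2, p, q, a, b] <;> ring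
  have hV : V = 1 ⊗ₖ !![0, p; q, 0] + !![0, p; q, 0] ⊗ₖ 1 := by rw [← hσt]; rfl
  set v : Fin 2 × Fin 2 → ℂ := Pi.single (0, 0) p - Pi.single (1, 1) q
  have hVv : V *ᵥ v = 0 := hV ▸ kroneckerSum_antidiag_mulVec_singlet _ _
  have hVhv : Vᴴ *ᵥ v ≠ 0 := by
    have hcs : Real.cos γ * Real.sin γ ≠ 0 := by
      rw [Real.sin_two_mul, mul_assoc, mul_comm (Real.sin γ)] at h2γ
      exact right_ne_zero_of_mul h2γ
    have hβ' : Real.sin (β₂ - β₁) ≠ 0 := by rwa [← neg_sub, Real.sin_neg, neg_ne_zero]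
    intro h
    have h01 := congrFun h (0, 1)
    rw [hV, conjTranspose_kroneckerSum_antidiag_mulVec_singlet_apply,
      Complex.star_sub_I_mul_sub_star_add_I_mul, Complex.im_star_exp_mul_exp, Pi.zero_apply,
      Complex.ofReal_eq_zero, mul_assoc _ (Real.cos γ)] at h01
    exact mul_ne_zero four_ne_zero (mul_ne_zero hβ' hcs) h01
  have hdet : ∀ ρ : Matrix (Fin 2 × Fin 2) (Fin 2 × Fin 2) ℂ, ρ.PosSemidef →
      V * ρ * Vᴴ - (1 / 2 : ℂ) • (Vᴴ * V * ρ + ρ * (Vᴴ * V)) = 0 → ρ.det = 0 :=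
    fun ρ hρ hE => hρ.det_eq_zero_of_lindblad_stationary hE hVv hVhv
  exact ⟨fun ⟨ρ, hρ, hE⟩ => hρ.det_pos.ne' (hdet ρ hρ.posSemidef hE), hdet⟩
end

section
/- Let λ₁, λ₂ be positive real numbers and set V₊ = I₂⊗σ₃ + σ₃⊗I₂ and V₋ = I₂⊗σ₃ − σ₃⊗I₂. Then a 4×4 complex matrix ρ satisfies λ₁·(V₊ ρ V₊ − (1/2)(V₊² ρ + ρ V₊²)) + λ₂·(V₋ ρ V₋ − (1/2)(V₋² ρ + ρ V₋²)) = 0 if and only if ρ lies in the ℂ-linear span of I₂⊗I₂, I₂⊗σ₃, σ₃⊗I₂, and σ₃⊗σ₃. -/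
open Matrix
open scoped Kronecker ComplexOrder

/-!
Both jump operators are diagonal in the product basis, with eigenvalues `s₂ ± s₁`, where
`s₁, s₂ = ±1` are the eigenvalues of the two `σ₃` factors. A dissipator with a diagonal jump
operator `d` multiplies the entry `ρ a b` by `-(d a - d b)² / 2`, so with positive rates a
stationary state can only be supported where both jump operators have equal eigenvalues. Since
`(s₂ + s₁, s₂ - s₁)` determines `(s₁, s₂)`, the stationary states are exactly the diagonal
matrices, and these are spanned by the four tensor products of `I₂` and `σ₃`.
-/

section Dissipator

variable {n K : Type*} [Fintype n] [DecidableEq n] [Field K]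

/-- The Lindblad dissipator `V ρ V† - ½ {V† V, ρ}` of a self-adjoint jump operator `V`. -/
def dissipator (V ρ : Matrix n n K) : Matrix n n K :=
  V * ρ * V - (1 / 2 : K) • (V ^ 2 * ρ + ρ * V ^ 2)

theorem dissipator_diagonal_apply [CharZero K] (d : n → K) (ρ : Matrix n n K) (a b : n) :
    dissipator (diagonal d) ρ a b = -(1 / 2) * (d a - d b) ^ 2 * ρ a b := by
  simp only [dissipator, sq, diagonal_mul_diagonal, Matrix.sub_apply, Matrix.smul_apply,
    Matrix.add_apply, diagonal_mul, mul_diagonal, smul_eq_mul]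
  ring

end Dissipator

theorem mul_sq_add_mul_sq_eq_zero_iff {R : Type*} [Ring R] [LinearOrder R] [IsStrictOrderedRing R]
    {l₁ l₂ : R} (hl₁ : 0 < l₁) (hl₂ : 0 < l₂) (x y : R) :
    l₁ * x ^ 2 + l₂ * y ^ 2 = 0 ↔ x = 0 ∧ y = 0 := by
  rw [add_eq_zero_iff_of_nonneg (by positivity) (by positivity), mul_eq_zero, mul_eq_zero,
    or_iff_right hl₁.ne', or_iff_right hl₂.ne', pow_eq_zero_iff two_ne_zero,
    pow_eq_zero_iff two_ne_zero]

section TwoDiagonalChannels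

variable {n : Type*} [Fintype n] [DecidableEq n] {l₁ l₂ : ℝ}

theorem smul_dissipator_add_smul_dissipator_eq_zero_iff (hl₁ : 0 < l₁) (hl₂ : 0 < l₂)
    (d₁ d₂ : n → ℝ) (ρ : Matrix n n ℂ) :
    (l₁ : ℂ) • dissipator (diagonal fun a => (d₁ a : ℂ)) ρ +
        (l₂ : ℂ) • dissipator (diagonal fun a => (d₂ a : ℂ)) ρ = 0 ↔
      ∀ a b, ρ a b ≠ 0 → d₁ a = d₁ b ∧ d₂ a = d₂ b := by
  have entry : ∀ a b, ((l₁ : ℂ) • dissipator (diagonal fun a => (d₁ a : ℂ)) ρ +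
      (l₂ : ℂ) • dissipator (diagonal fun a => (d₂ a : ℂ)) ρ) a b =
        -(1 / 2) * ((l₁ * (d₁ a - d₁ b) ^ 2 + l₂ * (d₂ a - d₂ b) ^ 2 : ℝ) : ℂ) * ρ a b := by
    intro a b
    simp only [Matrix.add_apply, Matrix.smul_apply, dissipator_diagonal_apply, smul_eq_mul]
    push_cast
    ring
  simp only [← Matrix.ext_iff, entry, Matrix.zero_apply, mul_eq_zero, neg_eq_zero, one_div,
    inv_eq_zero, OfNat.ofNat_ne_zero, false_or, Complex.ofReal_eq_zero,
    mul_sq_add_mul_sq_eq_zero_iff hl₁ hl₂, sub_eq_zero]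
  exact forall₂_congr fun a b => or_iff_not_imp_right

theorem smul_dissipator_add_smul_dissipator_eq_zero_iff_isDiag (hl₁ : 0 < l₁) (hl₂ : 0 < l₂)
    {d₁ d₂ : n → ℝ} (hd : Function.Injective fun a => (d₁ a, d₂ a)) (ρ : Matrix n n ℂ) :
    (l₁ : ℂ) • dissipator (diagonal fun a => (d₁ a : ℂ)) ρ +
        (l₂ : ℂ) • dissipator (diagonal fun a => (d₂ a : ℂ)) ρ = 0 ↔ ρ.IsDiag := by
  rw [smul_dissipator_add_smul_dissipator_eq_zero_iff hl₁ hl₂]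
  refine ⟨fun h a b hab => ?_, fun h a b hρ => ?_⟩
  · by_contra hρ
    exact hab (hd (Prod.ext_iff.2 (h a b hρ)))
  · obtain rfl : a = b := by_contra fun hab => hρ (h hab)
    exact ⟨rfl, rfl⟩

end TwoDiagonalChannels

def zSign : Fin 2 → ℝ := ![1, -1]

theorem zSign_injective : Function.Injective zSign := by
  intro i j h
  fin_cases i <;> fin_cases j <;> first | rfl | norm_num [zSign] at h

theorem σ3_eq_diagonal_s14 : σ3 = diagonal fun i => (zSign i : ℂ) := by
  ext i j
  fin_cases i <;> fin_cases j <;> simp [σ3, zSign]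

theorem I2_kronecker_σ3_add_σ3_kronecker_I2 :
    I2 ⊗ₖ σ3 + σ3 ⊗ₖ I2 = diagonal fun p => ((zSign p.2 + zSign p.1 : ℝ) : ℂ) := by
  rw [I2, σ3_eq_diagonal_s14, ← diagonal_one, diagonal_kronecker_diagonal,
    diagonal_kronecker_diagonal, diagonal_add]
  simp

theorem I2_kronecker_σ3_sub_σ3_kronecker_I2 :
    I2 ⊗ₖ σ3 - σ3 ⊗ₖ I2 = diagonal fun p => ((zSign p.2 - zSign p.1 : ℝ) : ℂ) := by
  rw [I2, σ3_eq_diagonal_s14, ← diagonal_one, diagonal_kronecker_diagonal,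
    diagonal_kronecker_diagonal, diagonal_sub]
  simp

theorem injective_zSign_add_zSign_prod_sub :
    Function.Injective fun p : Fin 2 × Fin 2 =>
      (zSign p.2 + zSign p.1, zSign p.2 - zSign p.1) := by
  intro p q h
  simp only [Prod.mk.injEq] at h
  exact Prod.ext (zSign_injective (by linarith)) (zSign_injective (by linarith))

theorem mem_span_pauliZ_iff_isDiag (ρ : Matrix (Fin 2 × Fin 2) (Fin 2 × Fin 2) ℂ) :
    ρ ∈ Submodule.span ℂ ({I2 ⊗ₖ I2, I2 ⊗ₖ σ3, σ3 ⊗ₖ I2, σ3 ⊗ₖ σ3} :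
      Set (Matrix (Fin 2 × Fin 2) (Fin 2 × Fin 2) ℂ)) ↔ ρ.IsDiag := by
  have hσ3 : σ3.IsDiag := σ3_eq_diagonal_s14 ▸ isDiag_diagonal _
  have hI2 : I2.IsDiag := isDiag_one
  constructor
  · intro h
    induction h using Submodule.span_induction with
    | mem x hx =>
      rcases hx with rfl | rfl | rfl | rfl <;> apply IsDiag.kronecker <;> assumption
    | zero => exact isDiag_zero
    | add _ _ _ _ hx hy => exact hx.add hy
    | smul c _ _ hx => exact hx.smul c
  · intro h
    set f := ρ.diag
    -- the coefficients come from orthogonality of the characters of `(ℤ/2)²`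
    have hρ : ρ = ((f (0, 0) + f (0, 1) + f (1, 0) + f (1, 1)) / 4) • (I2 ⊗ₖ I2) +
        ((f (0, 0) - f (0, 1) + f (1, 0) - f (1, 1)) / 4) • (I2 ⊗ₖ σ3) +
        ((f (0, 0) + f (0, 1) - f (1, 0) - f (1, 1)) / 4) • (σ3 ⊗ₖ I2) +
        ((f (0, 0) - f (0, 1) - f (1, 0) + f (1, 1)) / 4) • (σ3 ⊗ₖ σ3) := by
      ext p q
      by_cases hpq : p = q
      · subst hpq
        fin_cases p <;> simp [f, I2, σ3] <;> ring
      · simp only [Matrix.add_apply, Matrix.smul_apply, h hpq, (hI2.kronecker hI2) hpq,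
          (hI2.kronecker hσ3) hpq, (hσ3.kronecker hI2) hpq, (hσ3.kronecker hσ3) hpq, smul_zero,
          add_zero]
    rw [hρ]
    refine Submodule.add_mem _ (Submodule.add_mem _ (Submodule.add_mem _ ?_ ?_) ?_) ?_ <;>
      exact Submodule.smul_mem _ _ (Submodule.subset_span (by simp))

theorem stationary_states_case_III (l₁ l₂ : ℝ) (hl₁ : 0 < l₁) (hl₂ : 0 < l₂) :
    let Vp : Matrix (Fin 2 × Fin 2) (Fin 2 × Fin 2) ℂ := I2 ⊗ₖ σ3 + σ3 ⊗ₖ I2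
    let Vm : Matrix (Fin 2 × Fin 2) (Fin 2 × Fin 2) ℂ := I2 ⊗ₖ σ3 - σ3 ⊗ₖ I2
    ∀ ρ : Matrix (Fin 2 × Fin 2) (Fin 2 × Fin 2) ℂ,
      ((l₁ : ℂ) • (Vp * ρ * Vp - (1 / 2 : ℂ) • (Vp ^ 2 * ρ + ρ * Vp ^ 2)) +
        (l₂ : ℂ) • (Vm * ρ * Vm - (1 / 2 : ℂ) • (Vm ^ 2 * ρ + ρ * Vm ^ 2)) = 0
      ↔ ρ ∈ Submodule.span ℂ
          ({I2 ⊗ₖ I2, I2 ⊗ₖ σ3, σ3 ⊗ₖ I2, σ3 ⊗ₖ σ3} :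
            Set (Matrix (Fin 2 × Fin 2) (Fin 2 × Fin 2) ℂ))) := by
  intro Vp Vm ρ
  change (l₁ : ℂ) • dissipator Vp ρ + (l₂ : ℂ) • dissipator Vm ρ = 0 ↔ _
  rw [mem_span_pauliZ_iff_isDiag, show Vp = _ from I2_kronecker_σ3_add_σ3_kronecker_I2,
    show Vm = _ from I2_kronecker_σ3_sub_σ3_kronecker_I2]
  exact smul_dissipator_add_smul_dissipator_eq_zero_iff_isDiag hl₁ hl₂
    injective_zSign_add_zSign_prod_sub ρ
end

section
/- Let a, b, c, d be real numbers with a > 0, b > 0, c > 0, and ab − d² > 0. Set r₁ = 2d/(a+b), r₂ = (b−a)d²/((a+b)(ab+ac+bc)), r₃ = (a+b+4c)d²/((a+b)(ab+ac+bc)). Then the 4×4 matrix ρ₀ = (1/4)(I₂⊗I₂ + r₁(I₂⊗σ₃ + σ₃⊗I₂) + r₂(σ₁⊗σ₁ − σ₂⊗σ₂) + r₃·σ₃⊗σ₃) is positive definite (i.e., ρ₀ is a stationary state of maximal rank). -/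
open Matrix
open scoped Kronecker ComplexOrder

/-!
In the basis `|00⟩, |01⟩, |10⟩, |11⟩` the matrix `4 ρ₀` is an X-matrix: it acts as `1 - r₃` on
`|01⟩, |10⟩` and as `[[1 + r₃ + 2 r₁, 2 r₂], [2 r₂, 1 + r₃ - 2 r₁]]` on `|00⟩, |11⟩`. It is therefore
positive definite as soon as `1 - r₃ > 0`, `1 + r₃ > 0` and `(2 r₁)² + (2 r₂)² < (1 + r₃)²`. For the
given coefficients these reduce, after clearing denominators, to polynomial inequalities that
follow from explicit sum-of-positive-terms identities in `a, b, c` and `a b - d² > 0`.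
-/

theorem Matrix.IsHermitian.kronecker {m n R : Type*} [CommMagma R] [StarMul R]
    {A : Matrix m m R} {B : Matrix n n R} (hA : A.IsHermitian) (hB : B.IsHermitian) :
    (A ⊗ₖ B).IsHermitian := by
  rw [IsHermitian, conjTranspose_kronecker, hA.eq, hB.eq]

theorem isHermitian_I2 : I2.IsHermitian := isHermitian_one

theorem isHermitian_σ1 : σ1.IsHermitian := by
  ext i j; fin_cases i <;> fin_cases j <;> simp [σ1]

theorem isHermitian_σ2 : σ2.IsHermitian := by
  ext i j; fin_cases i <;> fin_cases j <;> simp [σ2]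

theorem isHermitian_σ3 : σ3.IsHermitian := by
  ext i j; fin_cases i <;> fin_cases j <;> simp [σ3]

theorem binaryForm_pos {A C R : ℝ} (hA : 0 < A) (hdet : R ^ 2 < A * C) {p q : ℂ}
    (hpq : p ≠ 0 ∨ q ≠ 0) :
    0 < A * Complex.normSq p + C * Complex.normSq q + 2 * R * (star p * q).re := by
  have key : A * (A * Complex.normSq p + C * Complex.normSq q + 2 * R * (star p * q).re) =
      Complex.normSq (A * p + R * q) + (A * C - R ^ 2) * Complex.normSq q := by
    simp [Complex.normSq_apply]; ring
  refine pos_of_mul_pos_right (key ▸ ?_) hA.le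
  rcases eq_or_ne q 0 with rfl | hq
  · simpa [hA.ne'] using hpq
  · exact add_pos_of_nonneg_of_pos (Complex.normSq_nonneg _)
      (mul_pos (by linarith) (Complex.normSq_pos.2 hq))

section PauliXState

variable (r₁ r₂ r₃ : ℝ)

theorem isHermitian_pauliXState :
    (I2 ⊗ₖ I2 + (r₁ : ℂ) • (I2 ⊗ₖ σ3 + σ3 ⊗ₖ I2) +
        (r₂ : ℂ) • (σ1 ⊗ₖ σ1 - σ2 ⊗ₖ σ2) + (r₃ : ℂ) • (σ3 ⊗ₖ σ3)).IsHermitian := by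
  have hreal (r : ℝ) : IsSelfAdjoint (r : ℂ) := Complex.conj_ofReal r
  exact (((isHermitian_I2.kronecker isHermitian_I2).add
    (((isHermitian_I2.kronecker isHermitian_σ3).add
      (isHermitian_σ3.kronecker isHermitian_I2)).smul (hreal r₁))).add
    (((isHermitian_σ1.kronecker isHermitian_σ1).sub
      (isHermitian_σ2.kronecker isHermitian_σ2)).smul (hreal r₂))).add
    ((isHermitian_σ3.kronecker isHermitian_σ3).smul (hreal r₃))

theorem pauliXState_dotProduct_mulVec (x : Fin 2 × Fin 2 → ℂ) :
    star x ⬝ᵥ (I2 ⊗ₖ I2 + (r₁ : ℂ) • (I2 ⊗ₖ σ3 + σ3 ⊗ₖ I2) +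
        (r₂ : ℂ) • (σ1 ⊗ₖ σ1 - σ2 ⊗ₖ σ2) + (r₃ : ℂ) • (σ3 ⊗ₖ σ3)) *ᵥ x =
      (((1 + r₃ + 2 * r₁) * Complex.normSq (x (0, 0)) +
          (1 + r₃ - 2 * r₁) * Complex.normSq (x (1, 1)) +
          2 * (2 * r₂) * (star (x (0, 0)) * x (1, 1)).re +
        (1 - r₃) * (Complex.normSq (x (0, 1)) + Complex.normSq (x (1, 0))) : ℝ) : ℂ) := by
  simp only [σ1, σ2, σ3, I2, dotProduct, mulVec, Fintype.sum_prod_type, Fin.sum_univ_two,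
    Matrix.smul_apply, Matrix.add_apply, Matrix.sub_apply, kroneckerMap_apply, Pi.star_apply]
  apply Complex.ext <;> simp [Complex.normSq_apply] <;> ring

variable {r₁ r₂ r₃}

theorem posDef_pauliXState (hB : 0 < 1 - r₃) (htr : 0 < 1 + r₃)
    (hdet : (2 * r₁) ^ 2 + (2 * r₂) ^ 2 < (1 + r₃) ^ 2) :
    (I2 ⊗ₖ I2 + (r₁ : ℂ) • (I2 ⊗ₖ σ3 + σ3 ⊗ₖ I2) +
        (r₂ : ℂ) • (σ1 ⊗ₖ σ1 - σ2 ⊗ₖ σ2) + (r₃ : ℂ) • (σ3 ⊗ₖ σ3)).PosDef := by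
  refine .of_dotProduct_mulVec_pos (isHermitian_pauliXState r₁ r₂ r₃) fun x hx => ?_
  rw [pauliXState_dotProduct_mulVec, Complex.zero_lt_real]
  have hA : 0 < 1 + r₃ + 2 * r₁ := by nlinarith [sq_nonneg r₂]
  have hAC : (2 * r₂) ^ 2 < (1 + r₃ + 2 * r₁) * (1 + r₃ - 2 * r₁) := by linarith
  have hmid : 0 ≤ (1 - r₃) * (Complex.normSq (x (0, 1)) + Complex.normSq (x (1, 0))) :=
    mul_nonneg hB.le (add_nonneg (Complex.normSq_nonneg _) (Complex.normSq_nonneg _))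
  by_cases hout : x (0, 0) ≠ 0 ∨ x (1, 1) ≠ 0
  · exact add_pos_of_pos_of_nonneg (binaryForm_pos hA hAC hout) hmid
  · push Not at hout
    obtain ⟨h00, h11⟩ := hout
    have hin : x (0, 1) ≠ 0 ∨ x (1, 0) ≠ 0 := by
      by_contra! h
      exact hx (funext fun ⟨i, j⟩ => by fin_cases i <;> fin_cases j <;> simp [h00, h11, h])
    have hnorm : 0 < Complex.normSq (x (0, 1)) + Complex.normSq (x (1, 0)) := by
      rcases hin with h | h
      · exact add_pos_of_pos_of_nonneg (Complex.normSq_pos.2 h) (Complex.normSq_nonneg _)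
      · exact add_pos_of_nonneg_of_pos (Complex.normSq_nonneg _) (Complex.normSq_pos.2 h)
    simpa [h00, h11] using mul_pos hB hnorm

end PauliXState

theorem one_sub_r₃_pos {a b c d : ℝ} (ha : 0 < a) (hb : 0 < b) (hc : 0 < c)
    (habd : 0 < a * b - d ^ 2) :
    0 < 1 - (a + b + 4 * c) * d ^ 2 / ((a + b) * (a * b + a * c + b * c)) := by
  have hD : 0 < (a + b) * (a * b + a * c + b * c) := by positivity
  have key : (a + b) * (a * b + a * c + b * c) - (a + b + 4 * c) * d ^ 2 =
      c * (a - b) ^ 2 + (a + b + 4 * c) * (a * b - d ^ 2) := by ring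
  rw [sub_pos, div_lt_one hD, ← sub_pos, key]
  generalize a * b - d ^ 2 = u at habd ⊢
  positivity

theorem sq_two_r₁_add_sq_two_r₂_lt {a b c d : ℝ} (ha : 0 < a) (hb : 0 < b) (hc : 0 < c)
    (habd : 0 < a * b - d ^ 2) :
    (2 * (2 * d / (a + b))) ^ 2 +
        (2 * ((b - a) * d ^ 2 / ((a + b) * (a * b + a * c + b * c)))) ^ 2 <
      (1 + (a + b + 4 * c) * d ^ 2 / ((a + b) * (a * b + a * c + b * c))) ^ 2 := by
  set S := a * b + a * c + b * c
  have hS : 0 < S := by positivity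
  have hD : 0 < (a + b) * S := by positivity
  have key : a * b * (((a + b) * S + (a + b + 4 * c) * d ^ 2) ^ 2 - (4 * d * S) ^ 2 -
        (2 * (b - a) * d ^ 2) ^ 2) =
      (a * b - d ^ 2) * (c * (a - b) ^ 2 * ((a + b) * S + a * b * (a + b + 4 * c)) +
          a * b * (a + b + 4 * c) ^ 2 * (a * b - d ^ 2) + 4 * a * b * (a - b) ^ 2 * d ^ 2) +
        d ^ 2 * (c * (a - b) ^ 2 * (c * (a - b) ^ 2 + 4 * a * b * (a + b))) := by
    simp only [S]; ring
  have hpoly : 0 < ((a + b) * S + (a + b + 4 * c) * d ^ 2) ^ 2 - (4 * d * S) ^ 2 -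
      (2 * (b - a) * d ^ 2) ^ 2 := by
    refine pos_of_mul_pos_right (key ▸ ?_) (mul_pos ha hb).le
    generalize a * b - d ^ 2 = u at habd ⊢
    positivity
  rw [show 2 * (2 * d / (a + b)) = 4 * d * S / ((a + b) * S) by field_simp; ring,
    show 2 * ((b - a) * d ^ 2 / ((a + b) * S)) = 2 * (b - a) * d ^ 2 / ((a + b) * S) by ring,
    one_add_div hD.ne', div_pow, div_pow, div_pow, ← add_div,
    div_lt_div_iff_of_pos_right (by positivity)]
  linarith

theorem stationary_state_case_IV_posDef (a b c d : ℝ)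
    (ha : 0 < a) (hb : 0 < b) (hc : 0 < c) (habd : 0 < a * b - d ^ 2) :
    let r₁ : ℝ := 2 * d / (a + b)
    let r₂ : ℝ := (b - a) * d ^ 2 / ((a + b) * (a * b + a * c + b * c))
    let r₃ : ℝ := (a + b + 4 * c) * d ^ 2 / ((a + b) * (a * b + a * c + b * c))
    let ρ₀ : Matrix (Fin 2 × Fin 2) (Fin 2 × Fin 2) ℂ :=
      (1 / 4 : ℂ) • (I2 ⊗ₖ I2 + (r₁ : ℂ) • (I2 ⊗ₖ σ3 + σ3 ⊗ₖ I2) +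
        (r₂ : ℂ) • (σ1 ⊗ₖ σ1 - σ2 ⊗ₖ σ2) + (r₃ : ℂ) • (σ3 ⊗ₖ σ3))
    ρ₀.PosDef := by
  intro r₁ r₂ r₃ ρ₀
  have hr₃ : 0 ≤ r₃ := by positivity
  exact (posDef_pauliXState (one_sub_r₃_pos ha hb hc habd) (by linarith)
    (sq_two_r₁_add_sq_two_r₂_lt ha hb hc habd)).smul (by norm_num)
end

section
/- Let a, b, c, d be real numbers with a ≥ 0, b ≥ 0, c > 0, a + b > 0, and ab − d² ≥ 0. Let A be the 3×3 complex matrix !![a, i*d, 0; −i*d, b, 0; 0, 0, c] and define the Lindblad generator on 2×2 complex matrices L(ρ) = Σ_{i,j=1}^{3} A_{ij}·(σᵢ ρ σⱼ − (1/2)(σⱼ σᵢ ρ + ρ σⱼ σᵢ)). Then ρ∞ = (1/2)(I₂ − (2d/(a+b))·σ₃) satisfies L(ρ∞) = 0, and every Hermitian 2×2 matrix ρ with trace(ρ) = 1 and L(ρ) = 0 equals ρ∞; i.e., ρ∞ is the unique stationary state, with Bloch vector (0, 0, −2d/(a+b)). -/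
open Matrix
open scoped Kronecker ComplexOrder

/-- The Pauli matrices as a family. -/
noncomputable def pauli : Fin 3 → Matrix (Fin 2) (Fin 2) ℂ := ![σ1, σ2, σ3]

/-
Written in the entries of `ρ = !![p, q; r, s]`, the generator decouples. The off-diagonal
entries obey `(a + b + 2c) q = (a - b) r` and `(a + b + 2c) r = (a - b) q`, which force
`q = r = 0` because `(a + b + 2c)² > (a - b)²`. The diagonal entries obey the single balance
equation `(a + b) (p - s) + 2d (p + s) = 0`, which together with `p + s = 1` fixes them.
-/

open Complex

noncomputable def kossakowski (a b c d : ℝ) : Matrix (Fin 3) (Fin 3) ℂ :=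
  !![(a : ℂ), I * d, 0; -I * d, (b : ℂ), 0; 0, 0, (c : ℂ)]

noncomputable def lindbladian {ι n : Type*} [Fintype ι] [Fintype n] (F : ι → Matrix n n ℂ)
    (A : Matrix ι ι ℂ) (ρ : Matrix n n ℂ) : Matrix n n ℂ :=
  ∑ i, ∑ j, A i j • (F i * ρ * F j - (1 / 2 : ℂ) • (F j * F i * ρ + ρ * (F j * F i)))

lemma lindbladian_kossakowski (a b c d : ℝ) (ρ : Matrix (Fin 2) (Fin 2) ℂ) :
    lindbladian pauli (kossakowski a b c d) ρ =
      !![(a + b) * (ρ 1 1 - ρ 0 0) - 2 * d * (ρ 0 0 + ρ 1 1),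
         (a - b) * ρ 1 0 - (a + b + 2 * c) * ρ 0 1;
         (a - b) * ρ 0 1 - (a + b + 2 * c) * ρ 1 0,
         (a + b) * (ρ 0 0 - ρ 1 1) + 2 * d * (ρ 0 0 + ρ 1 1)] := by
  conv_lhs => rw [eta_fin_two ρ]
  simp only [lindbladian, kossakowski, pauli, σ1, σ2, σ3, Fin.sum_univ_three]
  ext i j
  fin_cases i <;> fin_cases j <;> simp <;> ring_nf <;> simp only [I_sq] <;> ring

lemma eq_zero_of_sq_ne_sq {K : Type*} [Field K] {u v x y : K} (huv : u ^ 2 ≠ v ^ 2)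
    (hx : u * x = v * y) (hy : u * y = v * x) : x = 0 := by
  have : (u ^ 2 - v ^ 2) * x = 0 := by linear_combination u * hx + v * hy
  exact (mul_eq_zero.1 this).resolve_left (sub_ne_zero.2 huv)

lemma lindbladian_kossakowski_eq_zero_iff {a b c : ℝ} (d : ℝ) (ha : 0 ≤ a) (hb : 0 ≤ b)
    (hc : 0 < c) (ρ : Matrix (Fin 2) (Fin 2) ℂ) :
    lindbladian pauli (kossakowski a b c d) ρ = 0 ↔
      ρ 0 1 = 0 ∧ ρ 1 0 = 0 ∧ (a + b) * (ρ 0 0 - ρ 1 1) + 2 * d * (ρ 0 0 + ρ 1 1) = 0 := by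
  -- (a + b + 2c)² - (a - b)² = 4 (a + c) (b + c) > 0
  have hsq : ((a + b + 2 * c : ℝ) : ℂ) ^ 2 ≠ ((a - b : ℝ) : ℂ) ^ 2 := by
    rw [← Complex.ofReal_pow, ← Complex.ofReal_pow, Ne, Complex.ofReal_inj]
    nlinarith
  push_cast at hsq
  rw [lindbladian_kossakowski, ← Matrix.ext_iff]
  simp only [Fin.forall_fin_two, of_apply, cons_val', cons_val_zero, cons_val_one,
    empty_val', cons_val_fin_one, Matrix.zero_apply]
  constructor
  · rintro ⟨⟨h00, h01⟩, h10, -⟩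
    have hq : ρ 0 1 = 0 :=
      eq_zero_of_sq_ne_sq (y := ρ 1 0) hsq (by linear_combination -h01) (by linear_combination -h10)
    have hr : ρ 1 0 = 0 :=
      eq_zero_of_sq_ne_sq (y := ρ 0 1) hsq (by linear_combination -h10) (by linear_combination -h01)
    exact ⟨hq, hr, by linear_combination -h00⟩
  · rintro ⟨hq, hr, hdiag⟩
    refine ⟨⟨by linear_combination -hdiag, ?_⟩, ?_, hdiag⟩ <;> simp [hq, hr]

lemma half_smul_I2_sub_smul_σ3 (t : ℂ) :
    (1 / 2 : ℂ) • (I2 - t • σ3) = !![(1 - t) / 2, 0; 0, (1 + t) / 2] := by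
  ext i j
  fin_cases i <;> fin_cases j <;> simp [I2, σ3] <;> ring

theorem unique_stationary_state_single_qubit_general (a b c d : ℝ)
    (ha : 0 ≤ a) (hb : 0 ≤ b) (hc : 0 < c) (hab : 0 < a + b) :
    let A : Matrix (Fin 3) (Fin 3) ℂ :=
      !![(a : ℂ), Complex.I * d, 0; -Complex.I * d, (b : ℂ), 0; 0, 0, (c : ℂ)]
    let L : Matrix (Fin 2) (Fin 2) ℂ → Matrix (Fin 2) (Fin 2) ℂ :=
      fun ρ => ∑ i, ∑ j, A i j •
        (pauli i * ρ * pauli j -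
          (1 / 2 : ℂ) • (pauli j * pauli i * ρ + ρ * (pauli j * pauli i)))
    let ρinf : Matrix (Fin 2) (Fin 2) ℂ :=
      (1 / 2 : ℂ) • (I2 - ((2 * d / (a + b) : ℝ) : ℂ) • σ3)
    L ρinf = 0 ∧
      ∀ ρ : Matrix (Fin 2) (Fin 2) ℂ, ρ.IsHermitian → ρ.trace = 1 →
        L ρ = 0 → ρ = ρinf := by
  intro A L ρinf
  have hL : ∀ ρ, L ρ = 0 ↔
      ρ 0 1 = 0 ∧ ρ 1 0 = 0 ∧ (a + b) * (ρ 0 0 - ρ 1 1) + 2 * d * (ρ 0 0 + ρ 1 1) = 0 :=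
    lindbladian_kossakowski_eq_zero_iff d ha hb hc
  have hab' : (a + b : ℂ) ≠ 0 := by exact_mod_cast hab.ne'
  have hρinf : ρinf = !![(1 - 2 * d / (a + b) : ℂ) / 2, 0; 0, (1 + 2 * d / (a + b)) / 2] := by
    simp only [ρinf, half_smul_I2_sub_smul_σ3]
    push_cast
    rfl
  refine ⟨?_, fun ρ _ htr hρ => ?_⟩
  · rw [hL, hρinf]
    refine ⟨rfl, rfl, ?_⟩
    simp only [of_apply, cons_val', cons_val_zero, cons_val_one, empty_val', cons_val_fin_one]
    field_simp
    ring
  · obtain ⟨h01, h10, hdiag⟩ := (hL ρ).1 hρ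
    rw [trace_fin_two] at htr
    rw [eta_fin_two ρ, hρinf, h01, h10]
    congr
    · field_simp
      linear_combination hdiag + (a + b - 2 * d) * htr
    · field_simp
      linear_combination -hdiag + (a + b + 2 * d) * htr

theorem unique_stationary_state_single_qubit (a b c d : ℝ)
    (ha : 0 ≤ a) (hb : 0 ≤ b) (hc : 0 < c) (hab : 0 < a + b)
    (habd : 0 ≤ a * b - d ^ 2) :
    let A : Matrix (Fin 3) (Fin 3) ℂ :=
      !![(a : ℂ), Complex.I * d, 0; -Complex.I * d, (b : ℂ), 0; 0, 0, (c : ℂ)]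
    let L : Matrix (Fin 2) (Fin 2) ℂ → Matrix (Fin 2) (Fin 2) ℂ :=
      fun ρ => ∑ i, ∑ j, A i j •
        (pauli i * ρ * pauli j -
          (1 / 2 : ℂ) • (pauli j * pauli i * ρ + ρ * (pauli j * pauli i)))
    let ρinf : Matrix (Fin 2) (Fin 2) ℂ :=
      (1 / 2 : ℂ) • (I2 - ((2 * d / (a + b) : ℝ) : ℂ) • σ3)
    L ρinf = 0 ∧
      ∀ ρ : Matrix (Fin 2) (Fin 2) ℂ, ρ.IsHermitian → ρ.trace = 1 →
        L ρ = 0 → ρ = ρinf :=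
  unique_stationary_state_single_qubit_general a b c d ha hb hc hab
end
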